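/- arXiv:1707.00981 — 6 statements merged into one kernel-verified Lean document; each statement's English description precedes it below -/
import Mathlib

section
/- Fix k ≥ 0, block sizes n_1,…,n_{k+1}, nonempty sets A_m ⊆ {1,…,n_m}, targets t_m ∈ A_m, and staircases C_m = ∏_{i ∈ A_m\{t_m}} CNOT_{i→t_m} acting on the m-th block. Let W = (C_1⊗⋯⊗C_{k+1})⁻¹ · G · (C_1⊗⋯⊗C_{k+1}), where G is the gate C^kZ(θ) applied to the qubits t_1,…,t_{k+1} (one in each block). Then for all computational basis states, W(|x^{(1)}⟩⊗⋯⊗|x^{(k+1)}⟩) = e^{iθ·∏_{m=1}^{k+1} parity_{A_m}(x^{(m)})} |x^{(1)}⟩⊗⋯⊗|x^{(k+1)}⟩. Consequently, if each block carries a 2-dimensional codespace with orthonormal basis {|0̄⟩_m, |1̄⟩_m} satisfying (∏_{i∈A_m} Z_i)|b̄⟩_m = (−1)^b |b̄⟩_m, then W implements the logical C^kZ(θ) gate: W(|b̄_1⟩⊗⋯⊗|b̄_{k+1}⟩) = e^{iθ·b_1⋯b_{k+1}} |b̄_1⟩⊗⋯⊗|b̄_{k+1}⟩, using one physical C^kZ(θ)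 gate and 2(|A_m|−1) CNOT gates on each block. -/
open scoped Classical
open Matrix

noncomputable section

/-- basis vector `|x⟩` -/
def bvec {α : Type*} (x : α) : α → ℂ := fun y => if y = x then 1 else 0

/-- inner product `⟪v, w⟫` on basis-indexed amplitude vectors -/
def qInner {α : Type*} [Fintype α] (v w : α → ℂ) : ℂ :=
  ∑ x, (starRingEnd ℂ) (v x) * w x

/-- Pauli X -/
def σx : Matrix Bool Bool ℂ := Matrix.of fun a b => if a = !b then 1 else 0
/-- Pauli Y -/
def σy : Matrix Bool Bool ℂ :=
  Matrix.of fun a b => if a = !b then (if a then Complex.I else -Complex.I) else 0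
/-- Pauli Z -/
def σz : Matrix Bool Bool ℂ := Matrix.of fun a b => if a = b then (if a then -1 else 1) else 0
/-- Hadamard -/
def Hgate : Matrix Bool Bool ℂ :=
  Matrix.of fun a b => (if a && b then -1 else 1) / (Real.sqrt 2 : ℂ)
/-- phase gate S = diag(1, i) -/
def Sgate : Matrix Bool Bool ℂ :=
  Matrix.of fun a b => if a = b then (if a then Complex.I else 1) else 0
/-- Z(θ) = diag(1, e^{iθ}) -/
def Zrot (θ : ℝ) : Matrix Bool Bool ℂ :=
  Matrix.of fun a b => if a = b then (if a then Complex.exp (θ * Complex.I) else 1) else 0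

/-- tensor product over `ι` of single-qubit matrices -/
def tensMat {ι : Type*} [Fintype ι] (P : ι → Matrix Bool Bool ℂ) :
    Matrix (ι → Bool) (ι → Bool) ℂ :=
  Matrix.of fun x y => ∏ i, P i (x i) (y i)

/-- CNOT with control `i`, target `t`, in one register -/
def CNOT {ι : Type*} (i t : ι) : Matrix (ι → Bool) (ι → Bool) ℂ :=
  Matrix.of fun y x => if y = Function.update x t (xor (x i) (x t)) then 1 else 0

/-- Z(θ) applied to qubit `t` -/
def ZrotAt {ι : Type*} (θ : ℝ) (t : ι) : Matrix (ι → Bool) (ι → Bool) ℂ :=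
  Matrix.of fun y x => if y = x then (if x t then Complex.exp (θ * Complex.I) else 1) else 0

/-- `parityOdd A x` : the bits of `x` indexed by `A` have odd parity -/
def parityOdd {ι : Type*} (A : Finset ι) (x : ι → Bool) : Prop :=
  (A.filter fun i => x i = true).card % 2 = 1

/-- `∏_{i ∈ A} Z_i` -/
def ZA {ι : Type*} [Fintype ι] (A : Finset ι) : Matrix (ι → Bool) (ι → Bool) ℂ :=
  tensMat fun i => if i ∈ A then σz else 1

/-- `∏_{j ∈ B} X_j` -/
def XB {ι : Type*} [Fintype ι] (B : Finset ι) : Matrix (ι → Bool) (ι → Bool) ℂ :=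
  tensMat fun j => if j ∈ B then σx else 1

/-- the joint `+1`-eigenspace of a set of matrices, as a submodule -/
def jointFixed {ι : Type*} [Fintype ι] (S : Set (Matrix (ι → Bool) (ι → Bool) ℂ)) :
    Submodule ℂ ((ι → Bool) → ℂ) where
  carrier := {v | ∀ g ∈ S, g.mulVec v = v}
  add_mem' := by
    intro a b ha hb g hg
    rw [Matrix.mulVec_add, ha g hg, hb g hg]
  zero_mem' := by
    intro g hg
    rw [Matrix.mulVec_zero]
  smul_mem' := by
    intro c a ha g hg
    rw [Matrix.mulVec_smul, ha g hg]

/-- a matrix on qubits `ι` acts only on the qubits in `A` (identity elsewhere) -/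
def ActsOnlyOn {ι : Type*} (M : Matrix (ι → Bool) (ι → Bool) ℂ) (A : Set ι) : Prop :=
  ∃ W : Matrix (A → Bool) (A → Bool) ℂ,
    ∀ x y, M x y =
      if ∀ i, i ∉ A → x i = y i then W (fun i => x i.val) (fun i => y i.val) else 0

/-- an `ι`-qubit Pauli operator `i^c · ⨂_i P_i` -/
structure PauliOp (ι : Type*) [Fintype ι] where
  phase : Fin 4
  fac : ι → Matrix Bool Bool ℂ
  isPauli : ∀ i, fac i = 1 ∨ fac i = σx ∨ fac i = σy ∨ fac i = σz

def PauliOp.toMatrix {ι : Type*} [Fintype ι] (p : PauliOp ι) :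
    Matrix (ι → Bool) (ι → Bool) ℂ :=
  Complex.I ^ (p.phase : ℕ) • tensMat p.fac

/-- number of non-identity tensor factors -/
def PauliOp.weight {ι : Type*} [Fintype ι] (p : PauliOp ι) : ℕ :=
  Set.ncard {i | p.fac i ≠ 1}

/-- tensor product of states of two registers -/
def tens2 {ι κ : Type*} (v : (ι → Bool) → ℂ) (w : (κ → Bool) → ℂ) :
    (ι → Bool) × (κ → Bool) → ℂ :=
  fun p => v p.1 * w p.2

/-- CNOT with control qubit `i` of the first register and target qubit `j` of the second -/
def CNOT2 {ι κ : Type*} (i : ι) (j : κ) :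
    Matrix ((ι → Bool) × (κ → Bool)) ((ι → Bool) × (κ → Bool)) ℂ :=
  Matrix.of fun y x =>
    if y = (x.1, Function.update x.2 j (xor (x.1 i) (x.2 j))) then 1 else 0

-- Steane code
def steaneGen : Fin 3 → (Fin 7 → Bool) :=
  ![![false, false, false, true, true, true, true],
    ![false, true, true, false, false, true, true],
    ![true, false, true, false, true, false, true]]

/-- the binary [7,3] code generated by 0001111, 0110011, 1010101 -/
def hammingC : Set (Fin 7 → Bool) :=
  {c | ∃ a b e : Bool,
    c = fun i => xor (a && steaneGen 0 i) (xor (b && steaneGen 1 i) (e && steaneGen 2 i))}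

/-- Steane logical basis: `steane false = |0̄⟩`, `steane true = |1̄⟩ = X^{⊗7}|0̄⟩` -/
def steane : Bool → ((Fin 7 → Bool) → ℂ) := fun b =>
  if b then (tensMat fun _ => σx).mulVec (fun y => if y ∈ hammingC then ((Real.sqrt 8 : ℂ))⁻¹ else 0)
  else fun y => if y ∈ hammingC then ((Real.sqrt 8 : ℂ))⁻¹ else 0

-- 5-qubit code
def fiveStab : Fin 4 → Matrix (Fin 5 → Bool) (Fin 5 → Bool) ℂ :=
  ![tensMat ![σx, σz, σz, σx, 1],
    tensMat ![1, σx, σz, σz, σx],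
    tensMat ![σx, 1, σx, σz, σz],
    tensMat ![σz, σx, 1, σx, σz]]

def fiveCodespace : Submodule ℂ ((Fin 5 → Bool) → ℂ) :=
  jointFixed (Set.range fiveStab)

/-- a choice of logical basis for the 5-qubit code -/
def fiveLogical (v : Bool → ((Fin 5 → Bool) → ℂ)) : Prop :=
  (∀ b, v b ∈ fiveCodespace) ∧ (∀ b, qInner (v b) (v b) = 1) ∧
  (tensMat fun _ : Fin 5 => σz).mulVec (v false) = v false ∧
  (tensMat fun _ : Fin 5 => σz).mulVec (v true) = -(v true) ∧
  (tensMat fun _ : Fin 5 => σx).mulVec (v false) = v true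

-- [[15,1,3]] Reed–Muller code
def rmBit (i : Fin 15) (j : Fin 4) : Bool := Nat.testBit (i.val + 1) j.val

def rmXstab (j : Fin 4) : Matrix (Fin 15 → Bool) (Fin 15 → Bool) ℂ :=
  tensMat fun i => if rmBit i j then σx else 1

def rmZstab (j k : Fin 4) : Matrix (Fin 15 → Bool) (Fin 15 → Bool) ℂ :=
  tensMat fun i => if rmBit i j && rmBit i k then σz else 1

def rmCodespace : Submodule ℂ ((Fin 15 → Bool) → ℂ) :=
  jointFixed ({M | ∃ j, M = rmXstab j} ∪ {M | ∃ j k, j < k ∧ M = rmZstab j k})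

/-- a choice of logical basis for the [[15,1,3]] Reed–Muller code -/
def rmLogical (w : Bool → ((Fin 15 → Bool) → ℂ)) : Prop :=
  (∀ b, w b ∈ rmCodespace) ∧ (∀ b, qInner (w b) (w b) = 1) ∧
  (tensMat fun _ : Fin 15 => σz).mulVec (w false) = w false ∧
  (tensMat fun _ : Fin 15 => σz).mulVec (w true) = -(w true) ∧
  (tensMat fun _ : Fin 15 => σx).mulVec (w false) = w true


/-- CNOT with control `i` and target `t` inside block `m` of a multi-block register. -/
def CNOTblk {k : ℕ} {n : Fin (k + 1) → ℕ} (m : Fin (k + 1)) (i t : Fin (n m)) :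
    Matrix (∀ m, Fin (n m) → Bool) (∀ m, Fin (n m) → Bool) ℂ :=
  Matrix.of fun y x =>
    if y = Function.update x m (Function.update (x m) t (xor (x m i) (x m t))) then 1 else 0

/-- the `(k+1)`-qubit gate `C^kZ(θ)` applied to the qubits `t 0, …, t k` (one per block). -/
def ckzAt {k : ℕ} {n : Fin (k + 1) → ℕ} (θ : ℝ) (t : ∀ m, Fin (n m)) :
    Matrix (∀ m, Fin (n m) → Bool) (∀ m, Fin (n m) → Bool) ℂ :=
  Matrix.of fun y x =>
    if y = x then (if ∀ m, x m (t m) = true then Complex.exp (θ * Complex.I) else 1) else 0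

/-- the tensor product `C_1 ⊗ ⋯ ⊗ C_{k+1}` of the per-block staircases of CNOTs
(each block `m` enumerated by the list `l m`). -/
def staircases {k : ℕ} {n : Fin (k + 1) → ℕ} (t : ∀ m, Fin (n m))
    (l : ∀ m, List (Fin (n m))) :
    Matrix (∀ m, Fin (n m) → Bool) (∀ m, Fin (n m) → Bool) ℂ :=
  ((List.finRange (k + 1)).map fun m => ((l m).map fun i => CNOTblk m i (t m)).prod).prod

/-- tensor product of one state per block. -/
def blockTens {k : ℕ} {n : Fin (k + 1) → ℕ}
    (v : ∀ m : Fin (k + 1), (Fin (n m) → Bool) → ℂ) : (∀ m, Fin (n m) → Bool) → ℂ :=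
  fun x => ∏ m, v m (x m)

/-!
CNOTs with a common target commute and add their controls into it, so the staircase of
block `m` permutes basis states by the involution that overwrites the target bit with
`parity_{A_m}`. Conjugating the diagonal gate `C^kZ(θ)` by this permutation matrix gives the
diagonal matrix whose phase reads the targets after the staircases, i.e. whose phase is
`e^{iθ}` exactly when every `parity_{A_m}` is odd. An eigenvector of `∏_{i ∈ A_m} Z_i` with
eigenvalue `(-1)^{b_m}` is supported on strings of parity `b_m`, so on a product of such vectors
that diagonal matrix acts by the single phase determined by `b`.
-/

theorem decide_parityOdd_insert {ι : Type*} [DecidableEq ι] {A : Finset ι} {i : ι}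
    (hi : i ∉ A) (x : ι → Bool) :
    decide (parityOdd (insert i A) x) = xor (x i) (decide (parityOdd A x)) := by
  have hi' : i ∉ A.filter fun j => x j = true := fun h => hi (Finset.mem_filter.mp h).1
  unfold parityOdd
  cases hxi : x i
  · simp [Finset.filter_insert, hxi]
  · simp only [Finset.filter_insert, hxi, if_true, Finset.card_insert_of_notMem hi',
      Bool.true_xor]
    by_cases h : (A.filter fun j => x j = true).card % 2 = 1 <;> simp [h] <;> omega

theorem parityOdd_congr {ι : Type*} {A : Finset ι} {x y : ι → Bool}
    (h : ∀ i ∈ A, x i = y i) : parityOdd A x ↔ parityOdd A y := by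
  unfold parityOdd
  rw [Finset.filter_congr fun i hi => by rw [h i hi]]

theorem xor_decide_parityOdd_erase {ι : Type*} [DecidableEq ι] {A : Finset ι} {s : ι}
    (hs : s ∈ A) (x : ι → Bool) :
    xor (x s) (decide (parityOdd (A.erase s) x)) = decide (parityOdd A x) := by
  conv_rhs => rw [← Finset.insert_erase hs]
  rw [decide_parityOdd_insert (Finset.notMem_erase s A)]

section PermutationMatrix

variable {α : Type*} [DecidableEq α]

def permMat (f : α → α) : Matrix α α ℂ := Matrix.of fun y x => if y = f x then 1 else 0

theorem permMat_mul [Fintype α] (f g : α → α) : permMat f * permMat g = permMat (f ∘ g) := by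
  ext y x
  simp [permMat, Matrix.mul_apply]

theorem permMat_id : permMat (id : α → α) = 1 := by
  ext y x
  simp [permMat, Matrix.one_apply]

theorem diagonal_mul_permMat [Fintype α] (d : α → ℂ) (f : α → α) :
    diagonal d * permMat f = permMat f * diagonal (d ∘ f) := by
  ext y x
  by_cases h : y = f x <;> simp [permMat, h]

theorem inv_permMat_mul_diagonal_mul_permMat [Fintype α] {f : α → α}
    (hf : Function.Involutive f) (d : α → ℂ) :
    (permMat f)⁻¹ * diagonal d * permMat f = diagonal (d ∘ f) := by
  have hsq : permMat f * permMat f = 1 := by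
    rw [permMat_mul, hf.comp_self, permMat_id]
  rw [Matrix.inv_eq_right_inv hsq, Matrix.mul_assoc, diagonal_mul_permMat, ← Matrix.mul_assoc,
    hsq, Matrix.one_mul]

theorem diagonal_mulVec_eq_smul [Fintype α] {d v : α → ℂ} {c : ℂ}
    (h : ∀ y, v y ≠ 0 → d y = c) : diagonal d *ᵥ v = c • v := by
  ext y
  rw [mulVec_diagonal, Pi.smul_apply, smul_eq_mul]
  by_cases hy : v y = 0
  · simp [hy]
  · rw [h y hy]

theorem eq_of_diagonal_mulVec_eq_smul [Fintype α] {d v : α → ℂ} {c : ℂ}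
    (h : diagonal d *ᵥ v = c • v) {y : α} (hy : v y ≠ 0) : d y = c := by
  have hy' := congrFun h y
  rw [mulVec_diagonal, Pi.smul_apply, smul_eq_mul] at hy'
  exact mul_right_cancel₀ hy hy'

end PermutationMatrix

theorem tensMat_diagonal {ι : Type*} [Fintype ι] (d : ι → Bool → ℂ) :
    tensMat (fun i => diagonal (d i)) = diagonal fun x => ∏ i, d i (x i) := by
  ext y x
  by_cases hyx : y = x
  · subst hyx
    simp [tensMat]
  · obtain ⟨i, hi⟩ := Function.ne_iff.mp hyx
    rw [diagonal_apply_ne _ hyx]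
    exact Finset.prod_eq_zero (Finset.mem_univ i) (diagonal_apply_ne _ hi)

theorem σz_eq_diagonal : σz = diagonal fun a => if a then -1 else 1 := by
  ext a b
  cases a <;> cases b <;> simp [σz]

theorem ZA_eq_diagonal {ι : Type*} [Fintype ι] (A : Finset ι) :
    ZA A = diagonal fun x => if parityOdd A x then -1 else 1 := by
  have hfac : (fun i => if i ∈ A then σz else 1) =
      fun i => diagonal fun a => if i ∈ A then (if a then -1 else 1) else 1 := by
    ext i : 1
    split_ifs <;> simp [σz_eq_diagonal]
  rw [ZA, hfac, tensMat_diagonal]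
  congr 1
  ext x
  rw [Finset.prod_ite_mem, Finset.univ_inter, Finset.prod_ite, Finset.prod_const,
    Finset.prod_const_one, mul_one, neg_one_pow_eq_pow_mod_two, parityOdd]
  rcases Nat.mod_two_eq_zero_or_one (A.filter fun i => x i = true).card with h | h <;> simp [h]

theorem parityOdd_iff_of_ZA_mulVec {ι : Type*} [Fintype ι] [DecidableEq ι] {A : Finset ι}
    {b : Bool} {v : (ι → Bool) → ℂ} (h : ZA A *ᵥ v = (if b then (-1 : ℂ) else 1) • v)
    {y : ι → Bool} (hy : v y ≠ 0) : parityOdd A y ↔ b = true := by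
  rw [ZA_eq_diagonal] at h
  have hd := eq_of_diagonal_mulVec_eq_smul h hy
  by_cases hp : parityOdd A y <;> cases b <;> simp [hp] at hd ⊢ <;> norm_num at hd

theorem list_prod_map_permMat_update {ι : Type*} [DecidableEq ι] {β : ι → Type*}
    [Fintype (∀ i, β i)] [DecidableEq (∀ i, β i)] (g : ∀ i, β i → β i) (M : List ι)
    (hM : M.Nodup) :
    (M.map fun i => permMat fun x => Function.update x i (g i (x i))).prod =
      permMat fun x i => if i ∈ M then g i (x i) else x i := by
  induction M with
  | nil => exact permMat_id.symm
  | cons j M ih =>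
    obtain ⟨hj, hM⟩ := List.nodup_cons.mp hM
    rw [List.map_cons, List.prod_cons, ih hM, permMat_mul]
    congr 1
    ext x i : 2
    by_cases hij : i = j
    · subst hij
      simp [hj]
    · simp [hij]

section Staircase

variable {k : ℕ} {n : Fin (k + 1) → ℕ}

theorem list_prod_map_CNOTblk (m : Fin (k + 1)) (s : Fin (n m)) (L : List (Fin (n m)))
    (hL : L.Nodup) (hs : s ∉ L) :
    (L.map fun i => CNOTblk m i s).prod = permMat fun x : (∀ m, Fin (n m) → Bool) =>
      Function.update x m
        (Function.update (x m) s (xor (x m s) (decide (parityOdd L.toFinset (x m))))) := by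
  induction L with
  | nil =>
    rw [List.map_nil, List.prod_nil, ← permMat_id]
    congr 1
    ext x : 1
    simp [parityOdd]
  | cons i L ih =>
    obtain ⟨hiL, hL⟩ := List.nodup_cons.mp hL
    have his : i ≠ s := fun h => hs (h ▸ List.mem_cons_self)
    have hCNOT : CNOTblk m i s = permMat fun x : (∀ m, Fin (n m) → Bool) =>
        Function.update x m (Function.update (x m) s (xor (x m i) (x m s))) := rfl
    rw [List.map_cons, List.prod_cons, ih hL (fun h => hs (List.mem_cons_of_mem i h)), hCNOT,
      permMat_mul, List.toFinset_cons]
    congr 1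
    ext x : 1
    simp [Function.update_of_ne his, decide_parityOdd_insert (List.mem_toFinset.not.mpr hiL),
      Bool.xor_left_comm]

def stairMap (A : ∀ m, Finset (Fin (n m))) (t : ∀ m, Fin (n m))
    (x : ∀ m, Fin (n m) → Bool) : ∀ m, Fin (n m) → Bool :=
  fun m => Function.update (x m) (t m) (decide (parityOdd (A m) (x m)))

theorem staircases_eq_permMat_stairMap {A : ∀ m, Finset (Fin (n m))} {t : ∀ m, Fin (n m)}
    (ht : ∀ m, t m ∈ A m) {l : ∀ m, List (Fin (n m))} (hl : ∀ m, (l m).Nodup)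
    (hlA : ∀ m, (l m).toFinset = (A m).erase (t m)) :
    staircases t l = permMat (stairMap A t) := by
  have htl : ∀ m, t m ∉ l m := fun m h =>
    Finset.notMem_erase (t m) (A m) (hlA m ▸ List.mem_toFinset.mpr h)
  rw [staircases, List.map_congr_left fun m _ => list_prod_map_CNOTblk m (t m) (l m) (hl m) (htl m),
    list_prod_map_permMat_update (fun m w => Function.update w (t m)
      (xor (w (t m)) (decide (parityOdd (l m).toFinset w)))) _ (List.nodup_finRange _)]
  congr 1
  ext x m : 2
  simp [stairMap, List.mem_finRange, hlA, xor_decide_parityOdd_erase (ht _)]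

theorem stairMap_involutive {A : ∀ m, Finset (Fin (n m))} {t : ∀ m, Fin (n m)}
    (ht : ∀ m, t m ∈ A m) : Function.Involutive (stairMap A t) := by
  intro x
  ext m : 1
  set w := x m
  set q := decide (parityOdd ((A m).erase (t m)) w)
  have hq : decide (parityOdd ((A m).erase (t m)) (Function.update w (t m) (xor (w (t m)) q))) =
      q :=
    decide_eq_decide.mpr <| parityOdd_congr fun i hi =>
      Function.update_of_ne (Finset.ne_of_mem_erase hi) _ _
  simp only [stairMap, Function.update_idem, ← xor_decide_parityOdd_erase (ht m), w, q,
    Function.update_self, hq, Bool.xor_assoc, Bool.xor_self, Bool.xor_false,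
    Function.update_eq_self]

theorem ckzAt_eq_diagonal (θ : ℝ) (t : ∀ m, Fin (n m)) :
    ckzAt θ t =
      diagonal fun x => if ∀ m, x m (t m) = true then Complex.exp (θ * Complex.I) else 1 := by
  ext y x
  by_cases h : y = x <;> simp [ckzAt, h]

theorem apply_ne_zero_of_blockTens_ne_zero {v : ∀ m : Fin (k + 1), (Fin (n m) → Bool) → ℂ}
    {y : ∀ m, Fin (n m) → Bool} (hy : blockTens v y ≠ 0) (m : Fin (k + 1)) :
    v m (y m) ≠ 0 :=
  Finset.prod_ne_zero_iff.mp hy m (Finset.mem_univ m)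

end Staircase

theorem stmt2_general (k : ℕ) (n : Fin (k + 1) → ℕ)
    (A : ∀ m, Finset (Fin (n m)))
    (t : ∀ m, Fin (n m)) (ht : ∀ m, t m ∈ A m)
    (l : ∀ m, List (Fin (n m))) (hl : ∀ m, (l m).Nodup)
    (hlA : ∀ m, (l m).toFinset = (A m).erase (t m)) (θ : ℝ) :
    (∀ x : ∀ m, Fin (n m) → Bool,
      ((staircases t l)⁻¹ * ckzAt θ t * staircases t l).mulVec
          (blockTens fun m => bvec (x m))
        = (if ∀ m, parityOdd (A m) (x m) then Complex.exp (θ * Complex.I) else 1) •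
            blockTens fun m => bvec (x m)) ∧
    (∀ v : ∀ m : Fin (k + 1), Bool → ((Fin (n m) → Bool) → ℂ),
      (∀ m b, qInner (v m b) (v m b) = 1) →
      (∀ m, qInner (v m false) (v m true) = 0) →
      (∀ m b, (ZA (A m)).mulVec (v m b) = (if b then (-1 : ℂ) else 1) • v m b) →
      ∀ b : Fin (k + 1) → Bool,
        ((staircases t l)⁻¹ * ckzAt θ t * staircases t l).mulVec
            (blockTens fun m => v m (b m))
          = (if ∀ m, b m = true then Complex.exp (θ * Complex.I) else 1) •
              blockTens fun m => v m (b m)) := by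
  have hW : (staircases t l)⁻¹ * ckzAt θ t * staircases t l =
      diagonal fun x =>
        if ∀ m, parityOdd (A m) (x m) then Complex.exp (θ * Complex.I) else 1 := by
    rw [staircases_eq_permMat_stairMap ht hl hlA, ckzAt_eq_diagonal,
      inv_permMat_mul_diagonal_mul_permMat (stairMap_involutive ht)]
    congr 1
    ext x
    simp [stairMap]
  refine ⟨fun x => ?_, fun v _ _ hZ b => ?_⟩ <;> rw [hW] <;>
    refine diagonal_mulVec_eq_smul fun y hy => ?_
  · have hyx : y = x := funext fun m => by
      simpa [bvec] using apply_ne_zero_of_blockTens_ne_zero hy m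
    rw [hyx]
  · have hparity : ∀ m, parityOdd (A m) (y m) ↔ b m = true := fun m =>
      parityOdd_iff_of_ZA_mulVec (hZ m (b m)) (apply_ne_zero_of_blockTens_ne_zero hy m)
    simp only [hparity]

/-- `W = (C_1⊗⋯⊗C_{k+1})⁻¹ · C^kZ(θ)_{t_1…t_{k+1}} · (C_1⊗⋯⊗C_{k+1})`
multiplies each computational basis state by `e^{iθ·∏_m parity_{A_m}(x^{(m)})}`, and hence
implements the logical `C^kZ(θ)` on blockwise codespaces whose basis vectors are
`∏_{i∈A_m} Z_i`-eigenvectors. -/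
theorem stmt2 (k : ℕ) (n : Fin (k + 1) → ℕ)
    (A : ∀ m, Finset (Fin (n m))) (hA : ∀ m, (A m).Nonempty)
    (t : ∀ m, Fin (n m)) (ht : ∀ m, t m ∈ A m)
    (l : ∀ m, List (Fin (n m))) (hl : ∀ m, (l m).Nodup)
    (hlA : ∀ m, (l m).toFinset = (A m).erase (t m)) (θ : ℝ) :
    (∀ x : ∀ m, Fin (n m) → Bool,
      ((staircases t l)⁻¹ * ckzAt θ t * staircases t l).mulVec
          (blockTens fun m => bvec (x m))
        = (if ∀ m, parityOdd (A m) (x m) then Complex.exp (θ * Complex.I) else 1) •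
            blockTens fun m => bvec (x m)) ∧
    (∀ v : ∀ m : Fin (k + 1), Bool → ((Fin (n m) → Bool) → ℂ),
      (∀ m b, qInner (v m b) (v m b) = 1) →
      (∀ m, qInner (v m false) (v m true) = 0) →
      (∀ m b, (ZA (A m)).mulVec (v m b) = (if b then (-1 : ℂ) else 1) • v m b) →
      ∀ b : Fin (k + 1) → Bool,
        ((staircases t l)⁻¹ * ckzAt θ t * staircases t l).mulVec
            (blockTens fun m => v m (b m))
          = (if ∀ m, b m = true then Complex.exp (θ * Complex.I) else 1) •
              blockTens fun m => v m (b m)) :=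
  stmt2_general k n A t ht l hl hlA θ

end
end

section
/- For the 5-qubit code and every θ ∈ ℝ, there exist an orthonormal basis {|0̄⟩, |1̄⟩} of the codespace and a unitary U on (ℂ²)^{⊗5} that acts as the identity on qubits 2 and 4 (i.e., U is supported on the three qubits 1, 3, 5) such that U|0̄⟩ = |0̄⟩ and U|1̄⟩ = e^{iθ}|1̄⟩; that is, a logical Z(θ) gate on the 5-qubit code can be implemented by a circuit involving only the three active qubits 1, 3 and 5. -/
open scoped Classical
open Matrix

noncomputable section

-- ===== auxiliary development for stmt5 =====

/-- sign table for a single-qubit monomial factor -/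
def pcz (z b : Bool) : ℤ := if z && b then -1 else 1

/-- generic monomial single-qubit matrix: `pm s z` is `X^s Z^z` up to sign conventions -/
def pm (s z : Bool) : Matrix Bool Bool ℂ :=
  Matrix.of fun a b => if a = xor b s then ((pcz z b : ℤ) : ℂ) else 0

lemma tensMat_mulVec (s z : Fin 5 → Bool) (w : (Fin 5 → Bool) → ℂ) (y : Fin 5 → Bool) :
    (tensMat (fun i => pm (s i) (z i))).mulVec w y
      = ((∏ i, pcz (z i) (xor (y i) (s i)) : ℤ) : ℂ) * w (fun i => xor (y i) (s i)) := by
  have hxor : ∀ b c : Bool, xor (xor b c) c = b := by decide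
  show (∑ x, (∏ i, pm (s i) (z i) (y i) (x i)) * w x) = _
  rw [Finset.sum_eq_single (fun i => xor (y i) (s i))]
  · congr 1
    rw [Int.cast_prod]
    refine Finset.prod_congr rfl fun i _ => ?_
    show (if y i = xor (xor (y i) (s i)) (s i) then ((pcz (z i) (xor (y i) (s i)) : ℤ) : ℂ) else 0) = _
    rw [hxor, if_pos rfl]
  · intro x _ hx
    obtain ⟨i, hi⟩ := Function.ne_iff.mp hx
    refine mul_eq_zero_of_left (Finset.prod_eq_zero (Finset.mem_univ i) ?_) _
    show (if y i = xor (x i) (s i) then ((pcz (z i) (x i) : ℤ) : ℂ) else 0) = 0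
    rw [if_neg]
    revert hi
    cases x i <;> cases y i <;> cases s i <;> decide
  · intro h; exact absurd (Finset.mem_univ _) h

lemma sx_eq : σx = pm true false := by
  ext a b; cases a <;> cases b <;> simp [σx, pm, pcz]
lemma sz_eq : σz = pm false true := by
  ext a b; cases a <;> cases b <;> simp [σz, pm, pcz]
lemma one_eq : (1 : Matrix Bool Bool ℂ) = pm false false := by
  ext a b; cases a <;> cases b <;> simp [Matrix.one_apply, pm, pcz]

def sVec : Fin 4 → Fin 5 → Bool :=
  ![![true,false,false,true,false], ![false,true,false,false,true],
    ![true,false,true,false,false], ![false,true,false,true,false]]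
def zVec : Fin 4 → Fin 5 → Bool :=
  ![![false,true,true,false,false], ![false,false,true,true,false],
    ![false,false,false,true,true], ![true,false,false,false,true]]

lemma fiveStab_eq (k : Fin 4) :
    fiveStab k = tensMat (fun i => pm (sVec k i) (zVec k i)) := by
  have h1 := sx_eq; have h2 := sz_eq; have h3 := one_eq
  fin_cases k <;>
    · show tensMat _ = tensMat _
      refine congrArg tensMat (funext fun i => ?_)
      fin_cases i <;> first
        | rfl
        | (simp [sVec, zVec, h1, h2, h3]; try rfl)

lemma mulVec_inst {m n α : Type*} [NonUnitalNonAssocSemiring α] (F1 F2 : Fintype n)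
    (M : Matrix m n α) (v : n → α) :
    @Matrix.mulVec _ _ _ _ F1 M v = @Matrix.mulVec _ _ _ _ F2 M v := by
  rw [Subsingleton.elim F1 F2]

lemma mem_fiveCodespace (v : (Fin 5 → Bool) → ℂ) :
    v ∈ fiveCodespace ↔ ∀ k : Fin 4, (fiveStab k).mulVec v = v := by
  constructor
  · intro h k
    have := h (fiveStab k) ⟨k, rfl⟩
    rwa [mulVec_inst] at this
  · rintro h g ⟨k, rfl⟩
    rw [mulVec_inst]
    exact h k

def tbF : Bool → Bool → Bool → Bool → Bool → ℤ
  | false, false, false, false, true => -1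
  | false, false, false, true, false => -1
  | false, false, true, false, false => -1
  | false, false, true, true, true => -1
  | false, true, false, false, false => -1
  | false, true, false, true, true => 1
  | false, true, true, false, true => 1
  | false, true, true, true, false => -1
  | true, false, false, false, false => -1
  | true, false, false, true, true => -1
  | true, false, true, false, true => 1
  | true, false, true, true, false => 1
  | true, true, false, false, true => -1
  | true, true, false, true, false => 1
  | true, true, true, false, false => -1
  | true, true, true, true, true => 1
  | _, _, _, _, _ => 0

def tbT : Bool → Bool → Bool → Bool → Bool → ℤ
  | false, false, false, false, false => 1
  | false, false, false, true, true => -1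
  | false, false, true, false, true => 1
  | false, false, true, true, false => -1
  | false, true, false, false, true => 1
  | false, true, false, true, false => 1
  | false, true, true, false, false => -1
  | false, true, true, true, true => -1
  | true, false, false, false, true => -1
  | true, false, false, true, false => 1
  | true, false, true, false, false => 1
  | true, false, true, true, true => -1
  | true, true, false, false, false => -1
  | true, true, false, true, true => -1
  | true, true, true, false, true => -1
  | true, true, true, true, false => -1
  | _, _, _, _, _ => 0

def cF : (Fin 5 → Bool) → ℤ := fun y => tbF (y 0) (y 1) (y 2) (y 3) (y 4)
def cT : (Fin 5 → Bool) → ℤ := fun y => tbT (y 0) (y 1) (y 2) (y 3) (y 4)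

def vF : (Fin 5 → Bool) → ℂ := fun y => (cF y : ℂ)/4
def vT : (Fin 5 → Bool) → ℂ := fun y => (cT y : ℂ)/4

lemma mem_aux (c : (Fin 5 → Bool) → ℤ)
    (h : ∀ (k : Fin 4) (y : Fin 5 → Bool),
      (∏ i, pcz (zVec k i) (xor (y i) (sVec k i))) * c (fun i => xor (y i) (sVec k i)) = c y) :
    (fun y => (c y : ℂ)/4) ∈ fiveCodespace := by
  rw [mem_fiveCodespace]
  intro k
  funext y
  rw [fiveStab_eq k, tensMat_mulVec]
  rw [← mul_div_assoc, ← Int.cast_mul, h k y]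

lemma mem_vF : vF ∈ fiveCodespace := mem_aux cF (by decide)
lemma mem_vT : vT ∈ fiveCodespace := mem_aux cT (by decide)

lemma qInner_scaled (c d : (Fin 5 → Bool) → ℤ) :
    qInner (fun y => (c y : ℂ)/4) (fun y => (d y : ℂ)/4) = ((∑ x, c x * d x : ℤ) : ℂ)/16 := by
  unfold qInner
  rw [Int.cast_sum, Finset.sum_div]
  refine Finset.sum_congr rfl fun x _ => ?_
  rw [map_div₀, map_intCast, map_ofNat]
  push_cast
  ring

def sP : Fin 5 → Bool := ![true,false,false,false,true]
def zP : Fin 5 → Bool := ![false,false,true,false,false]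

def Pmat : Matrix (Fin 5 → Bool) (Fin 5 → Bool) ℂ := tensMat (fun i => pm (sP i) (zP i))

lemma Pmat_mulVec (w : (Fin 5 → Bool) → ℂ) (y : Fin 5 → Bool) :
    Pmat.mulVec w y
      = ((∏ i, pcz (zP i) (xor (y i) (sP i)) : ℤ) : ℂ) * w (fun i => xor (y i) (sP i)) :=
  tensMat_mulVec sP zP w y

lemma P_vF : Pmat.mulVec vF = vF := by
  funext y
  rw [Pmat_mulVec]
  show _ = (cF y : ℂ)/4
  rw [show vF (fun i => xor (y i) (sP i)) = ((cF (fun i => xor (y i) (sP i)) : ℤ) : ℂ)/4 from rfl]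
  rw [← mul_div_assoc, ← Int.cast_mul,
    show (∏ i, pcz (zP i) (xor (y i) (sP i))) * cF (fun i => xor (y i) (sP i)) = cF y from by
      revert y; decide]

lemma P_vT : Pmat.mulVec vT = -vT := by
  funext y
  rw [Pmat_mulVec]
  show _ = -((cT y : ℂ)/4)
  rw [show vT (fun i => xor (y i) (sP i)) = ((cT (fun i => xor (y i) (sP i)) : ℤ) : ℂ)/4 from rfl]
  rw [← mul_div_assoc, ← Int.cast_mul,
    show (∏ i, pcz (zP i) (xor (y i) (sP i))) * cT (fun i => xor (y i) (sP i)) = -(cT y) from by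
      revert y; decide]
  push_cast
  ring

lemma P_invol : ∀ w : (Fin 5 → Bool) → ℂ, Pmat.mulVec (Pmat.mulVec w) = w := by
  intro w
  funext y
  rw [Pmat_mulVec, Pmat_mulVec]
  rw [show (fun i => xor (xor (y i) (sP i)) (sP i)) = y from funext fun i => by
    cases y i <;> cases sP i <;> rfl]
  rw [← mul_assoc, ← Int.cast_mul,
    show (∏ i, pcz (zP i) (xor (y i) (sP i))) * (∏ i, pcz (zP i) (xor (xor (y i) (sP i)) (sP i))) = 1
      from by revert y; decide]
  rw [Int.cast_one, one_mul]

lemma mulVec_bvec (M : Matrix (Fin 5 → Bool) (Fin 5 → Bool) ℂ) (x : Fin 5 → Bool) :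
    M.mulVec (bvec x) = fun y => M y x := by
  funext y
  show (∑ z, M y z * bvec x z) = M y x
  simp [bvec, mul_ite]

lemma PP : Pmat * Pmat = 1 := by
  ext y x
  have h := congrFun (P_invol (bvec x)) y
  rw [Matrix.mulVec_mulVec, mulVec_bvec] at h
  have h2 : (Pmat * Pmat) y x = bvec x y := h
  rw [h2]
  simp [bvec, Matrix.one_apply]

lemma star_pm (s z a b : Bool) (h : ¬(s && z = true)) : star (pm s z a b) = pm s z b a := by
  cases s <;> cases z <;> cases a <;> cases b <;> simp_all [pm, pcz]

lemma starP : star Pmat = Pmat := by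
  have hsz : ∀ i : Fin 5, ¬(sP i && zP i = true) := by decide
  ext x y
  rw [Matrix.star_apply]
  show star (∏ i, pm (sP i) (zP i) (y i) (x i)) = ∏ i, pm (sP i) (zP i) (x i) (y i)
  rw [star_prod]
  exact Finset.prod_congr rfl fun i _ => star_pm (sP i) (zP i) (y i) (x i) (hsz i)

-- ===== end auxiliary development =====

/-- a logical `Z(θ)` gate on the 5-qubit code can be implemented by a
unitary supported only on the three active qubits 1, 3 and 5 (indices 0, 2, 4). -/
theorem stmt5 (θ : ℝ) :
    ∃ (v : Bool → ((Fin 5 → Bool) → ℂ)) (U : Matrix (Fin 5 → Bool) (Fin 5 → Bool) ℂ),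
      (∀ b, v b ∈ fiveCodespace) ∧ (∀ b, qInner (v b) (v b) = 1) ∧
      qInner (v false) (v true) = 0 ∧
      Submodule.span ℂ {v false, v true} = fiveCodespace ∧
      U ∈ Matrix.unitaryGroup (Fin 5 → Bool) ℂ ∧
      ActsOnlyOn U ({0, 2, 4} : Set (Fin 5)) ∧
      U.mulVec (v false) = v false ∧
      U.mulVec (v true) = Complex.exp (θ * Complex.I) • v true := by
  classical
  set e : ℂ := Complex.exp (θ * Complex.I) with he_def
  have hconj : (starRingEnd ℂ) (θ * Complex.I) = -(θ * Complex.I) := by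
    simp [_root_.map_mul, Complex.conj_ofReal, Complex.conj_I]
  have hse : e * star e = 1 := by
    rw [he_def, Complex.star_def, ← Complex.exp_conj, hconj, ← Complex.exp_add]
    simp
  refine ⟨fun b' => cond b' vT vF,
    ((1 + e)/2) • (1 : Matrix (Fin 5 → Bool) (Fin 5 → Bool) ℂ) + ((1 - e)/2) • Pmat,
    ?_, ?_, ?_, ?_, ?_, ?_, ?_, ?_⟩
  · -- membership
    intro b'
    cases b'
    · exact mem_vF
    · exact mem_vT
  · -- normalization
    intro b'
    cases b'
    · exact (qInner_scaled cF cF).trans (by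
        rw [show (∑ x, cF x * cF x) = 16 from by decide]; norm_num)
    · exact (qInner_scaled cT cT).trans (by
        rw [show (∑ x, cT x * cT x) = 16 from by decide]; norm_num)
  · -- orthogonality
    exact (qInner_scaled cF cT).trans (by
      rw [show (∑ x, cF x * cT x) = 0 from by decide]; norm_num)
  · -- span
    show Submodule.span ℂ {vF, vT} = fiveCodespace
    apply le_antisymm
    · rw [Submodule.span_le]
      rintro z (rfl | rfl)
      · exact mem_vF
      · exact mem_vT
    intro w hw
    set u : (Fin 5 → Bool) → ℂ :=
      w - (4 * w ![true,true,true,true,true]) • vF - (4 * w ![false,false,false,false,false]) • vT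
      with hu_def
    have humem : u ∈ fiveCodespace := by
      rw [hu_def]
      exact Submodule.sub_mem _
        (Submodule.sub_mem _ hw (Submodule.smul_mem _ _ mem_vF))
        (Submodule.smul_mem _ _ mem_vT)
    have hrel : ∀ (k : Fin 4) (y y' : Fin 5 → Bool), (∀ i, y' i = xor (y i) (sVec k i)) →
        u y = ((∏ i, pcz (zVec k i) (y' i) : ℤ) : ℂ) * u y' := by
      intro k y y' hy'
      have h := congrFun ((mem_fiveCodespace u).mp humem k) y
      rw [fiveStab_eq k, tensMat_mulVec] at h
      rw [show (∏ i, pcz (zVec k i) (xor (y i) (sVec k i))) = ∏ i, pcz (zVec k i) (y' i) from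
        Finset.prod_congr rfl fun i _ => by rw [hy' i]] at h
      rw [show (fun i => xor (y i) (sVec k i)) = y' from funext fun i => (hy' i).symm] at h
      exact h.symm
    have hpt : ∀ x, u x = 0 := by
      have hz0 : u ![false,false,false,false,false] = 0 := by
        rw [hu_def]
        simp only [Pi.sub_apply, Pi.smul_apply, smul_eq_mul, vF, vT]
        rw [show cF ![false,false,false,false,false] = 0 from by decide,
          show cT ![false,false,false,false,false] = 1 from by decide]
        push_cast
        ring
      have hz1 : u ![true,true,true,true,true] = 0 := by
        rw [hu_def]
        simp only [Pi.sub_apply, Pi.smul_apply, smul_eq_mul, vF, vT]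
        rw [show cF ![true,true,true,true,true] = 1 from by decide,
          show cT ![true,true,true,true,true] = 0 from by decide]
        push_cast
        ring
      have st1 := hrel 3 ![false, false, false, false, true] ![false, true, false, true, true] (by decide)
      have st2 := hrel 2 ![false, false, false, true, false] ![true, false, true, true, false] (by decide)
      have st3 := hrel 3 ![false, false, false, true, true] ![false, true, false, false, true] (by decide)
      have st4 := hrel 1 ![false, false, true, false, false] ![false, true, true, false, true] (by decide)
      have st5 := hrel 3 ![false, false, true, false, true] ![false, true, true, true, true] (by decide)
      have st6 := hrel 2 ![false, false, true, true, false] ![true, false, false, true, false] (by decide)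
      have st7 := hrel 3 ![false, false, true, true, true] ![false, true, true, false, true] (by decide)
      have st8 := hrel 3 ![false, true, false, false, false] ![false, false, false, true, false] (by decide)
      have st9 := hrel 1 ![false, true, false, false, true] ![false, false, false, false, false] (by decide)
      have st10 := hrel 3 ![false, true, false, true, false] ![false, false, false, false, false] (by decide)
      have st11 := hrel 2 ![false, true, false, true, true] ![true, true, true, true, true] (by decide)
      have st12 := hrel 3 ![false, true, true, false, false] ![false, false, true, true, false] (by decide)
      have st13 := hrel 0 ![false, true, true, false, true] ![true, true, true, true, true] (by decide)
      have st14 := hrel 3 ![false, true, true, true, false] ![false, false, true, false, false] (by decide)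
      have st15 := hrel 2 ![false, true, true, true, true] ![true, true, false, true, true] (by decide)
      have st16 := hrel 2 ![true, false, false, false, false] ![false, false, true, false, false] (by decide)
      have st17 := hrel 3 ![true, false, false, false, true] ![true, true, false, true, true] (by decide)
      have st18 := hrel 0 ![true, false, false, true, false] ![false, false, false, false, false] (by decide)
      have st19 := hrel 3 ![true, false, false, true, true] ![true, true, false, false, true] (by decide)
      have st20 := hrel 2 ![true, false, true, false, false] ![false, false, false, false, false] (by decide)
      have st21 := hrel 3 ![true, false, true, false, true] ![true, true, true, true, true] (by decide)
      have st22 := hrel 1 ![true, false, true, true, false] ![true, true, true, true, true] (by decide)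
      have st23 := hrel 3 ![true, false, true, true, true] ![true, true, true, false, true] (by decide)
      have st24 := hrel 3 ![true, true, false, false, false] ![true, false, false, true, false] (by decide)
      have st25 := hrel 2 ![true, true, false, false, true] ![false, true, true, false, true] (by decide)
      have st26 := hrel 3 ![true, true, false, true, false] ![true, false, false, false, false] (by decide)
      have st27 := hrel 1 ![true, true, false, true, true] ![true, false, false, true, false] (by decide)
      have st28 := hrel 3 ![true, true, true, false, false] ![true, false, true, true, false] (by decide)
      have st29 := hrel 2 ![true, true, true, false, true] ![false, true, false, false, true] (by decide)
      have st30 := hrel 3 ![true, true, true, true, false] ![true, false, true, false, false] (by decide)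
      intro x
      have hx : x = ![x 0, x 1, x 2, x 3, x 4] := by funext i; fin_cases i <;> rfl
      cases hb0 : x 0 <;> cases hb1 : x 1 <;> cases hb2 : x 2 <;> cases hb3 : x 3 <;>
        cases hb4 : x 4 <;> rw [hb0, hb1, hb2, hb3, hb4] at hx <;> rw [hx] <;>
        simp only [st1, st2, st3, st4, st5, st6, st7, st8, st9, st10, st11, st12, st13, st14, st15, st16, st17, st18, st19, st20, st21, st22, st23, st24, st25, st26, st27, st28, st29, st30, hz0, hz1, mul_zero]
    have hwe : w = (4 * w ![true,true,true,true,true]) • vF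
        + (4 * w ![false,false,false,false,false]) • vT := by
      funext x
      have h := hpt x
      rw [hu_def] at h
      simp only [Pi.sub_apply, Pi.add_apply, Pi.smul_apply, smul_eq_mul] at h ⊢
      linear_combination h
    rw [hwe]
    exact Submodule.add_mem _
      (Submodule.smul_mem _ _ (Submodule.subset_span (Set.mem_insert _ _)))
      (Submodule.smul_mem _ _ (Submodule.subset_span (Set.mem_insert_of_mem _ rfl)))
  · -- unitarity
    rw [Matrix.mem_unitaryGroup_iff]
    have hsa : star ((1 + e)/2) = (1 + star e)/2 := by
      rw [Complex.star_def, map_div₀, _root_.map_add, _root_.map_one, _root_.map_ofNat]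
    have hsb : star ((1 - e)/2) = (1 - star e)/2 := by
      rw [Complex.star_def, map_div₀, _root_.map_sub, _root_.map_one, _root_.map_ofNat]
    rw [star_add, star_smul, star_smul, star_one, starP, hsa, hsb]
    have key : (((1 + e)/2) • (1 : Matrix (Fin 5 → Bool) (Fin 5 → Bool) ℂ) + ((1 - e)/2) • Pmat) *
        (((1 + star e)/2) • (1 : Matrix (Fin 5 → Bool) (Fin 5 → Bool) ℂ) + ((1 - star e)/2) • Pmat)
        = ((1 + e)/2 * ((1 + star e)/2) + (1 - e)/2 * ((1 - star e)/2)) • (1 : Matrix (Fin 5 → Bool) (Fin 5 → Bool) ℂ)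
          + ((1 + e)/2 * ((1 - star e)/2) + (1 - e)/2 * ((1 + star e)/2)) • Pmat := by
      simp only [add_mul, mul_add, Matrix.smul_mul, Matrix.mul_smul, one_mul, mul_one, PP,
        smul_smul]
      module
    rw [key,
      show (1 + e)/2 * ((1 + star e)/2) + (1 - e)/2 * ((1 - star e)/2) = 1 from by
        linear_combination hse/2,
      show (1 + e)/2 * ((1 - star e)/2) + (1 - e)/2 * ((1 + star e)/2) = 0 from by
        linear_combination -hse/2,
      one_smul, zero_smul, add_zero]
  · -- acts only on qubits 0,2,4
    have h0A : (0 : Fin 5) ∈ ({0,2,4} : Set (Fin 5)) := Set.mem_insert _ _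
    have h2A : (2 : Fin 5) ∈ ({0,2,4} : Set (Fin 5)) :=
      Set.mem_insert_of_mem _ (Set.mem_insert _ _)
    have h4A : (4 : Fin 5) ∈ ({0,2,4} : Set (Fin 5)) :=
      Set.mem_insert_of_mem _ (Set.mem_insert_of_mem _ rfl)
    have h1A : (1 : Fin 5) ∉ ({0,2,4} : Set (Fin 5)) := by
      intro hmem
      rcases Set.mem_insert_iff.mp hmem with h | hmem2
      · exact absurd h (by decide)
      rcases Set.mem_insert_iff.mp hmem2 with h | h
      · exact absurd h (by decide)
      · exact absurd (Set.mem_singleton_iff.mp h) (by decide)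
    have h3A : (3 : Fin 5) ∉ ({0,2,4} : Set (Fin 5)) := by
      intro hmem
      rcases Set.mem_insert_iff.mp hmem with h | hmem2
      · exact absurd h (by decide)
      rcases Set.mem_insert_iff.mp hmem2 with h | h
      · exact absurd h (by decide)
      · exact absurd (Set.mem_singleton_iff.mp h) (by decide)
    refine ⟨Matrix.of fun u' v' =>
      ((1 + e)/2) * (if u' = v' then 1 else 0) +
      ((1 - e)/2) * (pm true false (u' ⟨0, h0A⟩) (v' ⟨0, h0A⟩) *
        (pm false true (u' ⟨2, h2A⟩) (v' ⟨2, h2A⟩) *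
         pm true false (u' ⟨4, h4A⟩) (v' ⟨4, h4A⟩))), fun x y => ?_⟩
    by_cases h : ∀ i, i ∉ ({0,2,4} : Set (Fin 5)) → x i = y i
    · rw [if_pos h]
      have h1 : x 1 = y 1 := h 1 h1A
      have h3 : x 3 = y 3 := h 3 h3A
      have hPxy : Pmat x y
          = pm true false (x 0) (y 0) * (pm false true (x 2) (y 2) * pm true false (x 4) (y 4)) := by
        show (∏ i, pm (sP i) (zP i) (x i) (y i)) = _
        rw [Fin.prod_univ_five]
        rw [show sP 0 = true from rfl, show sP 1 = false from rfl, show sP 2 = false from rfl,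
          show sP 3 = false from rfl, show sP 4 = true from rfl,
          show zP 0 = false from rfl, show zP 1 = false from rfl, show zP 2 = true from rfl,
          show zP 3 = false from rfl, show zP 4 = false from rfl]
        rw [show pm false false (x 1) (y 1) = 1 from by rw [h1]; cases y 1 <;> simp [pm, pcz],
          show pm false false (x 3) (y 3) = 1 from by rw [h3]; cases y 3 <;> simp [pm, pcz]]
        ring
      have hiff : x = y ↔ (fun i : ({0,2,4} : Set (Fin 5)) => x i.val)
          = (fun i : ({0,2,4} : Set (Fin 5)) => y i.val) := by
        constructor
        · rintro rfl; rfl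
        · intro hr
          funext i
          by_cases hi : i ∈ ({0,2,4} : Set (Fin 5))
          · simpa using congrFun hr ⟨i, hi⟩
          · exact h i hi
      show ((1 + e)/2) • (1 : Matrix (Fin 5 → Bool) (Fin 5 → Bool) ℂ) x y
          + ((1 - e)/2) • Pmat x y = _
      rw [Matrix.one_apply, hPxy, Matrix.of_apply]
      rw [if_congr hiff rfl rfl]
      simp only [smul_eq_mul]
    · rw [if_neg h]
      push_neg at h
      obtain ⟨i, hiA, hxy⟩ := h
      have hne : x ≠ y := fun hh => hxy (by rw [hh])
      have hfive : ∀ j : Fin 5, j = 0 ∨ j = 1 ∨ j = 2 ∨ j = 3 ∨ j = 4 := by decide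
      have hj : ∃ j : Fin 5, sP j = false ∧ zP j = false ∧ x j ≠ y j := by
        rcases hfive i with rfl | rfl | rfl | rfl | rfl
        · exact absurd h0A hiA
        · exact ⟨1, rfl, rfl, hxy⟩
        · exact absurd h2A hiA
        · exact ⟨3, rfl, rfl, hxy⟩
        · exact absurd h4A hiA
      obtain ⟨j, hs, hz, hjj⟩ := hj
      have hP0 : Pmat x y = 0 := by
        show (∏ i, pm (sP i) (zP i) (x i) (y i)) = 0
        refine Finset.prod_eq_zero (Finset.mem_univ j) ?_
        rw [hs, hz]
        show (if x j = xor (y j) false then ((pcz false (y j) : ℤ) : ℂ) else 0) = 0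
        rw [Bool.xor_false, if_neg hjj]
      show ((1 + e)/2) • (1 : Matrix (Fin 5 → Bool) (Fin 5 → Bool) ℂ) x y
          + ((1 - e)/2) • Pmat x y = 0
      rw [Matrix.one_apply, if_neg hne, hP0]
      simp
  · -- U fixes v false
    show (((1 + e)/2) • (1 : Matrix (Fin 5 → Bool) (Fin 5 → Bool) ℂ)
        + ((1 - e)/2) • Pmat).mulVec vF = vF
    rw [Matrix.add_mulVec, Matrix.smul_mulVec, Matrix.smul_mulVec,
      Matrix.one_mulVec, P_vF, ← add_smul, show (1 + e)/2 + (1 - e)/2 = 1 from by ring, one_smul]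
  · -- U phases v true
    show (((1 + e)/2) • (1 : Matrix (Fin 5 → Bool) (Fin 5 → Bool) ℂ)
        + ((1 - e)/2) • Pmat).mulVec vT = e • vT
    rw [Matrix.add_mulVec, Matrix.smul_mulVec, Matrix.smul_mulVec,
      Matrix.one_mulVec, P_vT, smul_neg, ← sub_eq_add_neg, ← sub_smul,
      show (1 + e)/2 - (1 - e)/2 = e from by ring]


end
end

section
/- Let A ⊆ {1,…,n₂} and B ⊆ {1,…,n₃}, and let U = ∏_{(i,j)∈A×B} CNOT_{i→j} be the round-robin product of CNOT gates from qubit i of a first n₂-qubit register to qubit j of a second n₃-qubit register (all these CNOT gates commute with one another, so the order is irrelevant). If v ∈ (ℂ²)^{⊗n₂} satisfies (∏_{i∈A} Z_i) v = (−1)^a v for some a ∈ {0,1}, then for every w ∈ (ℂ²)^{⊗n₃}, U(v ⊗ w) = v ⊗ ((∏_{j∈B} X_j)^a w). -/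
open scoped Classical
open Matrix

noncomputable section

/-- Bool to `ZMod 2` -/
def bz (b : Bool) : ZMod 2 := if b = true then 1 else 0

lemma bz_xor (a b : Bool) : bz (xor a b) = bz a + bz b := by
  cases a <;> cases b <;> simp [bz] <;> decide

lemma bz_inj {a b : Bool} (h : bz a = bz b) : a = b := by
  cases a <;> cases b <;> simp_all [bz]

/-- accumulated flip bit at target `j` from CNOTs in `l` with controls set by `x` -/
def flipB {n₂ n₃ : ℕ} (l : List (Fin n₂ × Fin n₃)) (x : Fin n₂ → Bool) (j : Fin n₃) : Bool :=
  l.foldr (fun p b => xor (decide (p.2 = j) && x p.1) b) false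

lemma cnot2_inv {n₂ n₃ : ℕ} (i : Fin n₂) (j : Fin n₃)
    (x : (Fin n₂ → Bool) × (Fin n₃ → Bool)) :
    (x.1, Function.update (Function.update x.2 j (xor (x.1 i) (x.2 j))) j
      (xor (x.1 i) (Function.update x.2 j (xor (x.1 i) (x.2 j)) j))) = x := by
  have h1 : Function.update x.2 j (xor (x.1 i) (x.2 j)) j = xor (x.1 i) (x.2 j) :=
    Function.update_self _ _ _
  rw [h1, Function.update_idem]
  have h2 : xor (x.1 i) (xor (x.1 i) (x.2 j)) = x.2 j := by
    cases x.1 i <;> cases x.2 j <;> rfl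
  rw [h2, Function.update_eq_self]

lemma cnot2_mulVec {n₂ n₃ : ℕ} (i : Fin n₂) (j : Fin n₃)
    (f : (Fin n₂ → Bool) × (Fin n₃ → Bool) → ℂ)
    (q : (Fin n₂ → Bool) × (Fin n₃ → Bool)) :
    (CNOT2 i j).mulVec f q = f (q.1, Function.update q.2 j (xor (q.1 i) (q.2 j))) := by
  have key : ∀ x : (Fin n₂ → Bool) × (Fin n₃ → Bool),
      (q = (x.1, Function.update x.2 j (xor (x.1 i) (x.2 j)))) ↔
      (x = (q.1, Function.update q.2 j (xor (q.1 i) (q.2 j)))) := by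
    intro x
    constructor
    · intro h
      rw [h]
      exact (cnot2_inv i j x).symm
    · intro h
      rw [h]
      exact (cnot2_inv i j q).symm
  have hI : ∀ (inst : DecidableEq (Fin n₃)) (g : Fin n₃ → Bool) (b : Bool),
      @Function.update (Fin n₃) (fun _ => Bool) inst g j b
        = @Function.update (Fin n₃) (fun _ => Bool) (instDecidableEqFin n₃) g j b := by
    intro inst g b
    funext k
    by_cases hk : k = j
    · subst hk
      simp only [Function.update_self]
    · simp only [Function.update_of_ne hk]
      exact (@Function.update_of_ne (Fin n₃) (fun _ => Bool) (instDecidableEqFin n₃) k j hk b g).symm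
  simp only [Matrix.mulVec, dotProduct, CNOT2, Matrix.of_apply, hI]
  rw [Finset.sum_eq_single (q.1, Function.update q.2 j (xor (q.1 i) (q.2 j)))]
  · split
    · rw [one_mul]
    · next hq => exact absurd ((key _).mpr rfl) hq
  · intro x _ hx
    split
    · next hq => exact absurd ((key x).mp hq) hx
    · rw [zero_mul]
  · intro hmem
    exact absurd (Finset.mem_univ _) hmem

lemma prod_cnot2_mulVec {n₂ n₃ : ℕ} (l : List (Fin n₂ × Fin n₃))
    (f : (Fin n₂ → Bool) × (Fin n₃ → Bool) → ℂ) :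
    ((l.map fun p => CNOT2 p.1 p.2).prod).mulVec f
      = fun q => f (q.1, fun j => xor (q.2 j) (flipB l q.1 j)) := by
  induction l with
  | nil =>
    funext q
    simp [flipB, Matrix.one_mulVec]
  | cons p t ih =>
    funext q
    rw [List.map_cons, List.prod_cons, ← Matrix.mulVec_mulVec, cnot2_mulVec, ih]
    have hb : ((fun q : (Fin n₂ → Bool) × (Fin n₃ → Bool) =>
          f (q.1, fun j => xor (q.2 j) (flipB t q.1 j)))
        (q.1, Function.update q.2 p.2 (xor (q.1 p.1) (q.2 p.2))))
      = f (q.1, fun j => xor (Function.update q.2 p.2 (xor (q.1 p.1) (q.2 p.2)) j)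
          (flipB t q.1 j)) := rfl
    rw [hb]
    congr 1
    simp only [Prod.mk.injEq, true_and]
    funext j
    have hxor : ∀ a b c : Bool, xor (xor a b) c = xor b (xor a c) := by decide
    by_cases h : j = p.2
    · rw [h, Function.update_self]
      have hc : flipB (p :: t) q.1 p.2
          = xor (decide (p.2 = p.2) && q.1 p.1) (flipB t q.1 p.2) := rfl
      rw [hc, decide_eq_true rfl, Bool.true_and]
      exact hxor _ _ _
    · rw [Function.update_of_ne h]
      have hc : flipB (p :: t) q.1 j
          = xor (decide (p.2 = j) && q.1 p.1) (flipB t q.1 j) := rfl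
      rw [hc, decide_eq_false (fun hh => h hh.symm), Bool.false_and, Bool.false_xor]

lemma bz_flipB {n₂ n₃ : ℕ} (l : List (Fin n₂ × Fin n₃)) (x : Fin n₂ → Bool) (j : Fin n₃) :
    bz (flipB l x j) = (l.map fun p => if p.2 = j then bz (x p.1) else 0).sum := by
  induction l with
  | nil => simp [flipB, bz]
  | cons p t ih =>
    have hc : flipB (p :: t) x j = xor (decide (p.2 = j) && x p.1) (flipB t x j) := rfl
    rw [hc, bz_xor, ih, List.map_cons, List.sum_cons]
    congr 1
    by_cases h : p.2 = j <;> cases hx : x p.1 <;> simp [h, hx, bz]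

lemma flipB_eval {n₂ n₃ : ℕ} (A : Finset (Fin n₂)) (B : Finset (Fin n₃))
    (l : List (Fin n₂ × Fin n₃)) (hl : l.Nodup) (hlAB : l.toFinset = A ×ˢ B)
    (x : Fin n₂ → Bool) (j : Fin n₃) :
    bz (flipB l x j) = if j ∈ B then ∑ i ∈ A, bz (x i) else 0 := by
  rw [bz_flipB, ← List.sum_toFinset _ hl, hlAB, Finset.sum_product]
  have h1 : ∀ i : Fin n₂, ∑ j' ∈ B, (if j' = j then bz (x i) else 0)
      = if j ∈ B then bz (x i) else 0 := fun i => Finset.sum_ite_eq' B j _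
  calc ∑ i ∈ A, ∑ j' ∈ B, (if (i, j').2 = j then bz (x (i, j').1) else 0)
      = ∑ i ∈ A, (if j ∈ B then bz (x i) else 0) := Finset.sum_congr rfl (fun i _ => h1 i)
    _ = if j ∈ B then ∑ i ∈ A, bz (x i) else 0 := by
        by_cases h : j ∈ B <;> simp [h]

lemma ZA_apply {n : ℕ} (A : Finset (Fin n)) (x y : Fin n → Bool) :
    ZA A x y = if y = x then ∏ i ∈ A, (if x i = true then (-1 : ℂ) else 1) else 0 := by
  simp only [ZA, tensMat, Matrix.of_apply]
  by_cases h : y = x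
  · subst h
    rw [if_pos rfl]
    refine Eq.trans (Finset.prod_subset A.subset_univ fun i _ hi => ?_).symm
      (Finset.prod_congr rfl fun i hi => ?_)
    · simp [hi, Matrix.one_apply_eq]
    · cases hyi : y i <;> simp [hi, σz, hyi]
  · rw [if_neg h]
    obtain ⟨i, hi⟩ := Function.ne_iff.mp h
    have hne : x i ≠ y i := fun hh => hi hh.symm
    apply Finset.prod_eq_zero (Finset.mem_univ i)
    by_cases hA : i ∈ A
    · simp [hA, σz, hne]
    · simp [hA, Matrix.one_apply, hne]

lemma ZA_mulVec {n : ℕ} (A : Finset (Fin n)) (v : (Fin n → Bool) → ℂ) (x : Fin n → Bool) :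
    (ZA A).mulVec v x = (∏ i ∈ A, (if x i = true then (-1 : ℂ) else 1)) * v x := by
  simp only [Matrix.mulVec, dotProduct, ZA_apply, ite_mul, zero_mul]
  rw [Finset.sum_ite_eq' Finset.univ]
  simp [mul_comm]

lemma XB_mulVec {n : ℕ} (B : Finset (Fin n)) (w : (Fin n → Bool) → ℂ) (y : Fin n → Bool) :
    (XB B).mulVec w y = w (fun j => if j ∈ B then !(y j) else y j) := by
  have key : ∀ z, XB B y z
      = if z = (fun j => if j ∈ B then !(y j) else y j) then 1 else 0 := by
    intro z
    by_cases h : z = fun j => if j ∈ B then !(y j) else y j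
    · rw [if_pos h]
      simp only [XB, tensMat, Matrix.of_apply]
      apply Finset.prod_eq_one
      intro j _
      by_cases hj : j ∈ B
      · have : z j = !(y j) := by rw [h]; simp [hj]
        simp [hj, σx, this]
      · have : z j = y j := by rw [h]; simp [hj]
        simp [hj, Matrix.one_apply, this]
    · rw [if_neg h]
      obtain ⟨j, hj⟩ := Function.ne_iff.mp h
      simp only [XB, tensMat, Matrix.of_apply]
      apply Finset.prod_eq_zero (Finset.mem_univ j)
      by_cases hB : j ∈ B
      · simp only [hB, if_pos] at hj ⊢
        have : y j ≠ !(z j) := by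
          intro hh; apply hj; cases hz : z j <;> cases hy : y j <;> simp_all
        simp [σx, this]
      · simp only [hB, if_neg, ite_false] at hj ⊢
        have hne : y j ≠ z j := fun hh => hj hh.symm
        simp [Matrix.one_apply, hne]
  simp only [Matrix.mulVec, dotProduct, key, ite_mul, one_mul, zero_mul]
  rw [Finset.sum_ite_eq' Finset.univ]
  simp

lemma parity_from_eigen {n : ℕ} (A : Finset (Fin n)) (a : Bool) (x : Fin n → Bool)
    (h : (∏ i ∈ A, (if x i = true then (-1 : ℂ) else 1)) = (if a then (-1 : ℂ) else 1)) :
    ∑ i ∈ A, bz (x i) = bz a := by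
  have hprod : (∏ i ∈ A, (if x i = true then (-1 : ℂ) else 1))
      = (-1 : ℂ) ^ (A.filter fun i => x i = true).card := by
    rw [Finset.prod_ite, Finset.prod_const, Finset.prod_const, one_pow, mul_one]
  have hsum : ∑ i ∈ A, bz (x i)
      = ((A.filter fun i => x i = true).card : ZMod 2) := by
    unfold bz
    rw [Finset.sum_boole]
  rw [hsum]
  set N := (A.filter fun i => x i = true).card with hN
  rw [hprod] at h
  have h2 : (N : ZMod 2) = if a then 1 else 0 := by
    rcases Nat.even_or_odd N with he | ho
    · rw [he.neg_one_pow] at h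
      cases a
      · simp only [Bool.false_eq_true, if_false]
        exact (CharP.cast_eq_zero_iff (ZMod 2) 2 N).mpr he.two_dvd
      · rw [if_pos rfl] at h
        exact absurd h (by norm_num)
    · rw [ho.neg_one_pow] at h
      cases a
      · rw [if_neg (by simp)] at h
        exact absurd h (by norm_num)
      · simp only [if_true]
        obtain ⟨k, hk⟩ := ho
        rw [hk]
        push_cast
        rw [show (2 : ZMod 2) = 0 by decide, zero_mul, zero_add]
  rw [h2]
  cases a <;> simp [bz]

/-- the round-robin product `U = ∏_{(i,j)∈A×B} CNOT_{i→j}` (the factors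
commute, so we quantify over every enumeration `l` of `A × B`) maps `v ⊗ w` to
`v ⊗ ((∏_{j∈B} X_j)^a w)` whenever `(∏_{i∈A} Z_i) v = (−1)^a v`. -/
theorem stmt6 (n₂ n₃ : ℕ) (A : Finset (Fin n₂)) (B : Finset (Fin n₃))
    (l : List (Fin n₂ × Fin n₃)) (hl : l.Nodup) (hlAB : l.toFinset = A ×ˢ B)
    (a : Bool) (v : (Fin n₂ → Bool) → ℂ)
    (hv : (ZA A).mulVec v = (if a then (-1 : ℂ) else 1) • v)
    (w : (Fin n₃ → Bool) → ℂ) :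
    ((l.map fun p => CNOT2 p.1 p.2).prod).mulVec (tens2 v w)
      = tens2 v (if a then (XB B).mulVec w else w) := by
  rw [prod_cnot2_mulVec]
  funext q
  obtain ⟨x, y⟩ := q
  show v x * w (fun j => xor (y j) (flipB l x j))
      = v x * (if a then (XB B).mulVec w else w) y
  by_cases hx : v x = 0
  · rw [hx, zero_mul, zero_mul]
  · have heig := congrFun hv x
    rw [ZA_mulVec] at heig
    have heq : (∏ i ∈ A, (if x i = true then (-1 : ℂ) else 1)) = (if a then (-1 : ℂ) else 1) := by
      have : ((if a then (-1 : ℂ) else 1) • v) x = (if a then (-1 : ℂ) else 1) * v x := rfl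
      rw [this] at heig
      exact mul_right_cancel₀ hx heig
    have hpar := parity_from_eigen A a x heq
    have hflip : ∀ j, flipB l x j = if j ∈ B then a else false := by
      intro j
      apply bz_inj
      rw [flipB_eval A B l hl hlAB, hpar]
      by_cases h : j ∈ B <;> simp [h, bz]
    congr 1
    cases a
    · show w (fun j => xor (y j) (flipB l x j)) = w y
      congr 1
      funext j
      rw [hflip]
      by_cases h : j ∈ B <;> simp [h]
    · show w (fun j => xor (y j) (flipB l x j)) = (XB B).mulVec w y
      rw [XB_mulVec]
      congr 1
      funext j
      rw [hflip]
      by_cases h : j ∈ B <;> simp [h]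

end
end

section
/- Let V₂ ⊆ (ℂ²)^{⊗n₂} be a 2-dimensional codespace with orthonormal basis {|0̄⟩, |1̄⟩} satisfying (∏_{i∈A} Z_i)|ā⟩ = (−1)^a |ā⟩ for some A ⊆ {1,…,n₂}, and let V₃ ⊆ (ℂ²)^{⊗n₃} be a 2-dimensional codespace with orthonormal basis {|0̃⟩, |1̃⟩} satisfying (∏_{j∈B} X_j)|b̃⟩ = |(1−b)͂⟩ for some B ⊆ {1,…,n₃}. Then the round-robin product U = ∏_{(i,j)∈A×B} CNOT_{i→j} of |A|·|B| physical CNOT gates maps V₂ ⊗ V₃ onto itself and implements the logical CNOT gate with the first code as control and the second as target: U(|ā⟩ ⊗ |b̃⟩) = |ā⟩ ⊗ |(a⊕b)͂⟩ for all a, b ∈ {0,1}. -/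
open scoped Classical
open Matrix

noncomputable section

/-!
Each physical CNOT permutes computational basis states, so the round-robin circuit sends
`|x⟩ ⊗ |y⟩` to `|x⟩ ⊗ |y ⊕ c(x)⟩`, where `c(x)_j` is the parity of the number of pairs
`(i, j) ∈ A × B` with `x_i = 1`, i.e. `c(x)_j = [j ∈ B] · (parity of x on A)`. The `Z`-eigenvalue
condition forces `|ā⟩` to be supported on strings whose parity on `A` is `a`, so on
`|ā⟩ ⊗ |b̃⟩` the circuit acts as `(∏_{j ∈ B} X_j)^a` on the second factor, giving `|(a ⊕ b)~⟩`.
Since `(a, b) ↦ (a, a ⊕ b)` is a bijection, the span of the product basis is preserved.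
-/

open scoped Finset

section

variable {ι κ : Type*}

lemma countP_eq_of_toFinset_eq_product [DecidableEq ι] [DecidableEq κ] {A : Finset ι}
    {B : Finset κ} {l : List (ι × κ)} (hl : l.Nodup) (hlAB : l.toFinset = A ×ˢ B)
    (x : ι → Bool) (k : κ) :
    (l.countP fun p => x p.1 = true ∧ p.2 = k) = if k ∈ B then #{i ∈ A | x i = true} else 0 := by
  rw [List.countP_eq_length_filter, ← List.toFinset_card_of_nodup (hl.filter _),
    List.toFinset_filter, hlAB]
  simp only [decide_eq_true_eq]
  rw [show {p ∈ A ×ˢ B | x p.1 = true ∧ p.2 = k} = {i ∈ A | x i = true} ×ˢ {j ∈ B | j = k} by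
    ext; simp [and_and_and_comm], Finset.card_product]
  split_ifs with hk
  · rw [show {j ∈ B | j = k} = {k} by ext; simp; grind, Finset.card_singleton, mul_one]
  · simp [hk]

variable [Fintype ι] [Fintype κ]

lemma tensMat_apply_of_monomial {P : ι → Matrix Bool Bool ℂ} {f : ι → Bool → Bool}
    {c : ι → Bool → ℂ} (hP : ∀ i a b, P i a b = if b = f i a then c i a else 0)
    (x y : ι → Bool) :
    tensMat P x y = if y = (fun i => f i (x i)) then ∏ i, c i (x i) else 0 := by
  simp only [tensMat, Matrix.of_apply, hP]
  split_ifs with h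
  · exact Finset.prod_congr rfl fun i _ => if_pos (congrFun h i)
  · obtain ⟨i, hi⟩ := Function.ne_iff.mp h
    exact Finset.prod_eq_zero (Finset.mem_univ i) (if_neg hi)

variable [DecidableEq ι] [DecidableEq κ]

lemma tensMat_mulVec_of_monomial {P : ι → Matrix Bool Bool ℂ} {f : ι → Bool → Bool}
    {c : ι → Bool → ℂ} (hP : ∀ i a b, P i a b = if b = f i a then c i a else 0)
    (u : (ι → Bool) → ℂ) (x : ι → Bool) :
    (tensMat P).mulVec u x = (∏ i, c i (x i)) * u (fun i => f i (x i)) := by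
  simp only [mulVec, dotProduct, tensMat_apply_of_monomial hP, ite_mul, zero_mul,
    Finset.sum_ite_eq', Finset.mem_univ, if_true]

lemma ZA_mulVec_apply (A : Finset ι) (u : (ι → Bool) → ℂ) (x : ι → Bool) :
    (ZA A).mulVec u x = (-1) ^ #{i ∈ A | x i = true} * u x := by
  rw [ZA, tensMat_mulVec_of_monomial (f := fun _ => id)
    (c := fun i a => if i ∈ A then (if a then -1 else 1) else 1)]
  · rw [Finset.prod_ite_mem, Finset.univ_inter, Finset.prod_ite, Finset.prod_const,
      Finset.prod_const_one, mul_one]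
    rfl
  · intro i a b
    by_cases hi : i ∈ A <;> cases a <;> cases b <;> simp [hi, σz]

lemma XB_mulVec_apply (B : Finset κ) (u : (κ → Bool) → ℂ) (y : κ → Bool) :
    (XB B).mulVec u y = u (fun j => xor (decide (j ∈ B)) (y j)) := by
  rw [XB, tensMat_mulVec_of_monomial (f := fun j => xor (decide (j ∈ B))) (c := fun _ _ => 1)]
  · simp
  · intro j a b
    by_cases hj : j ∈ B <;> cases a <;> cases b <;> simp [hj, σx]

lemma bodd_card_eq_of_ZA_mulVec_eq {A : Finset ι} {a : Bool} {u : (ι → Bool) → ℂ}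
    (hu : (ZA A).mulVec u = (if a then (-1 : ℂ) else 1) • u) {x : ι → Bool} (hx : u x ≠ 0) :
    (#{i ∈ A | x i = true}).bodd = a := by
  have h := congrFun hu x
  rw [ZA_mulVec_apply, Pi.smul_apply, smul_eq_mul] at h
  replace h := mul_right_cancel₀ hx h
  simp only [neg_one_pow_eq_ite, Nat.even_iff, Nat.mod_two_of_bodd] at h
  generalize (#{i ∈ A | x i = true}).bodd = p at h ⊢
  revert h
  cases a <;> cases p <;> norm_num

lemma CNOT2_mulVec_apply (i : ι) (j : κ) (u : (ι → Bool) × (κ → Bool) → ℂ)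
    (x : ι → Bool) (y : κ → Bool) :
    (CNOT2 i j).mulVec u (x, y) = u (x, fun k => xor (decide (k = j) && x i) (y k)) := by
  set g : (ι → Bool) × (κ → Bool) → (ι → Bool) × (κ → Bool) :=
    fun q => (q.1, fun k => xor (decide (k = j) && q.1 i) (q.2 k))
  have hg : Function.Involutive g := fun q => by simp [g]
  have hentry (q' q : (ι → Bool) × (κ → Bool)) : CNOT2 i j q' q = if q' = g q then 1 else 0 := by
    simp only [CNOT2, of_apply, g, Prod.ext_iff, funext_iff, Function.update_apply]
    congr! 4 with k
    split_ifs with hk <;> simp [hk]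
  simp only [mulVec, dotProduct, hentry, ite_mul, one_mul, zero_mul,
    eq_comm (a := ((x, y) : (ι → Bool) × (κ → Bool))), hg.eq_iff, Finset.sum_ite_eq',
    Finset.mem_univ, if_true, g]

lemma prod_CNOT2_mulVec_apply (l : List (ι × κ)) (u : (ι → Bool) × (κ → Bool) → ℂ)
    (x : ι → Bool) (y : κ → Bool) :
    ((l.map fun p => CNOT2 p.1 p.2).prod).mulVec u (x, y)
      = u (x, fun k => xor (l.countP fun p => x p.1 = true ∧ p.2 = k).bodd (y k)) := by
  induction l generalizing y with
  | nil => simp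
  | cons p l ih =>
    rw [List.map_cons, List.prod_cons, ← mulVec_mulVec, CNOT2_mulVec_apply, ih]
    congr 2
    funext k
    rw [List.countP_cons, Nat.bodd_add]
    by_cases hk : k = p.2
    · subst hk
      cases x p.1 <;> simp
    · simp [hk, Ne.symm hk]

lemma roundRobin_mulVec_tens2 {A : Finset ι} {B : Finset κ} {l : List (ι × κ)}
    (hl : l.Nodup) (hlAB : l.toFinset = A ×ˢ B) {a : Bool} {v : (ι → Bool) → ℂ}
    (hv : (ZA A).mulVec v = (if a then (-1 : ℂ) else 1) • v) (w : (κ → Bool) → ℂ) :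
    ((l.map fun p => CNOT2 p.1 p.2).prod).mulVec (tens2 v w)
      = tens2 v (if a then (XB B).mulVec w else w) := by
  funext ⟨x, y⟩
  rw [prod_CNOT2_mulVec_apply]
  simp only [tens2]
  by_cases hx : v x = 0
  · simp [hx]
  have hparity := bodd_card_eq_of_ZA_mulVec_eq hv hx
  simp only [countP_eq_of_toFinset_eq_product hl hlAB]
  cases a <;> simp [apply_ite Nat.bodd, hparity, XB_mulVec_apply]

end

theorem stmt7_general (n₂ n₃ : ℕ) (A : Finset (Fin n₂)) (B : Finset (Fin n₃))
    (v : Bool → ((Fin n₂ → Bool) → ℂ)) (w : Bool → ((Fin n₃ → Bool) → ℂ))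
    (hZ : ∀ a, (ZA A).mulVec (v a) = (if a then (-1 : ℂ) else 1) • v a)
    (hX : ∀ b, (XB B).mulVec (w b) = w (!b))
    (l : List (Fin n₂ × Fin n₃)) (hl : l.Nodup) (hlAB : l.toFinset = A ×ˢ B) :
    (∀ a b : Bool,
      ((l.map fun p => CNOT2 p.1 p.2).prod).mulVec (tens2 (v a) (w b))
        = tens2 (v a) (w (xor a b))) ∧
    Submodule.map ((l.map fun p => CNOT2 p.1 p.2).prod).mulVecLin
        (Submodule.span ℂ {u | ∃ a b : Bool, u = tens2 (v a) (w b)})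
      = Submodule.span ℂ {u | ∃ a b : Bool, u = tens2 (v a) (w b)} := by
  have hCNOT (a b : Bool) : ((l.map fun p => CNOT2 p.1 p.2).prod).mulVec (tens2 (v a) (w b))
      = tens2 (v a) (w (xor a b)) := by
    rw [roundRobin_mulVec_tens2 hl hlAB (hZ a)]
    cases a <;> simp [hX]
  refine ⟨hCNOT, ?_⟩
  rw [Submodule.map_span]
  congr 1
  ext u
  constructor
  · rintro ⟨_, ⟨a, b, rfl⟩, rfl⟩
    exact ⟨a, xor a b, hCNOT a b⟩
  · rintro ⟨a, b, rfl⟩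
    exact ⟨_, ⟨a, xor a b, rfl⟩, by simpa using hCNOT a (xor a b)⟩

/-- the round-robin product of `|A|·|B|` physical CNOT gates maps
`V₂ ⊗ V₃` onto itself and implements the logical CNOT with the first code as
control and the second as target. -/
theorem stmt7 (n₂ n₃ : ℕ) (A : Finset (Fin n₂)) (B : Finset (Fin n₃))
    (v : Bool → ((Fin n₂ → Bool) → ℂ)) (w : Bool → ((Fin n₃ → Bool) → ℂ))
    (hvn : ∀ a, qInner (v a) (v a) = 1) (hvo : qInner (v false) (v true) = 0)
    (hwn : ∀ b, qInner (w b) (w b) = 1) (hwo : qInner (w false) (w true) = 0)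
    (hZ : ∀ a, (ZA A).mulVec (v a) = (if a then (-1 : ℂ) else 1) • v a)
    (hX : ∀ b, (XB B).mulVec (w b) = w (!b))
    (l : List (Fin n₂ × Fin n₃)) (hl : l.Nodup) (hlAB : l.toFinset = A ×ˢ B) :
    (∀ a b : Bool,
      ((l.map fun p => CNOT2 p.1 p.2).prod).mulVec (tens2 (v a) (w b))
        = tens2 (v a) (w (xor a b))) ∧
    Submodule.map ((l.map fun p => CNOT2 p.1 p.2).prod).mulVecLin
        (Submodule.span ℂ {u | ∃ a b : Bool, u = tens2 (v a) (w b)})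
      = Submodule.span ℂ {u | ∃ a b : Bool, u = tens2 (v a) (w b)} :=
  stmt7_general n₂ n₃ A B v w hZ hX l hl hlAB

end
end

section
/- There exist a 3-element subset A ⊆ {1,…,7} and a 7-element subset B ⊆ {1,…,15} such that the round-robin product U = ∏_{(i,j)∈A×B} CNOT_{i→j} of 21 physical CNOT gates, each with control a qubit of a Steane code block and target a qubit of a [[15,1,3]] Reed–Muller code block, maps the tensor product of the two codespaces onto itself and implements the logical CNOT gate with the Steane block as control and the Reed–Muller block as target: U(|ā⟩ ⊗ |b̃⟩) = |ā⟩ ⊗ |(a⊕b)͂⟩ for all a, b ∈ {0,1}. -/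
open scoped Classical
open Matrix

noncomputable section

/-!
Take `A = {1, 2, 3}` (`{0, 1, 2}` in `Fin 7`) and `B = {1, …, 7}`. Every gate permutes
computational basis states without changing the Steane bits, so the gates commute and their product
flips the Reed–Muller bits in `B` exactly when the Steane bits in `A` have odd parity. Each codeword
of `C` has even weight on `A` and `|A|` is odd, so on the support of `|ā⟩` this parity is `a`.
On the Reed–Muller side, `X_B = X^{⊗15} · X_{Bᶜ}`, and `Bᶜ`, the qubits whose fourth binary digit
is `1`, is the support of an `X`-stabilizer; so `X_B` acts on the codespace as the logical `X`.
-/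

theorem mulVec_of_involutive {n : Type*} [Fintype n] [DecidableEq n] {f : n → n}
    (hf : Function.Involutive f) (v : n → ℂ) :
    (Matrix.of fun y x => if y = f x then (1 : ℂ) else 0) *ᵥ v = v ∘ f := by
  funext y
  simp [mulVec, dotProduct, ← hf.eq_iff]

theorem tensMat_σx_mulVec {ι : Type*} [Fintype ι] [DecidableEq ι] (f : ι → Bool)
    (v : (ι → Bool) → ℂ) :
    (tensMat fun i => if f i then σx else 1) *ᵥ v = fun y => v fun i => xor (y i) (f i) := by
  have hinv : Function.Involutive fun (y : ι → Bool) i => xor (y i) (f i) := fun y => by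
    funext i; simp
  have hmat : (tensMat fun i => if f i then σx else 1)
      = Matrix.of fun y x => if y = (fun i => xor (x i) (f i)) then (1 : ℂ) else 0 := by
    ext y x
    simp only [tensMat, Matrix.of_apply, funext_iff]
    trans ∏ i, if y i = xor (x i) (f i) then (1 : ℂ) else 0
    · refine Fintype.prod_congr _ _ fun i => ?_
      cases f i <;> cases x i <;> cases y i <;> simp [σx]
    · simp [Finset.prod_boole]
  rw [hmat, mulVec_of_involutive hinv]
  rfl

theorem tensMat_const_σx_mulVec {ι : Type*} [Fintype ι] [DecidableEq ι] (v : (ι → Bool) → ℂ) :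
    (tensMat fun _ : ι => σx) *ᵥ v = fun y => v fun i => !y i := by
  simpa using tensMat_σx_mulVec (fun _ => true) v

theorem mulVec_eq_of_mem_jointFixed {ι : Type*} [Fintype ι] [DecidableEq ι]
    {S : Set (Matrix (ι → Bool) (ι → Bool) ℂ)} {v : (ι → Bool) → ℂ} (hv : v ∈ jointFixed S)
    {g : Matrix (ι → Bool) (ι → Bool) ℂ} (hg : g ∈ S) : g *ᵥ v = v := by
  convert hv g hg

def cnotFlips {ι κ : Type*} [DecidableEq κ] (l : List (ι × κ)) (x : ι → Bool) (j : κ) : ℕ :=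
  l.countP fun p => decide (p.2 = j) && x p.1

section CNOT

variable {ι κ : Type*} [Fintype ι] [Fintype κ] [DecidableEq ι] [DecidableEq κ]

theorem CNOT2_mulVec (i : ι) (j : κ) (v : (ι → Bool) × (κ → Bool) → ℂ) :
    CNOT2 i j *ᵥ v = fun x => v (x.1, Function.update x.2 j (xor (x.1 i) (x.2 j))) := by
  have hinv : Function.Involutive
      fun x : (ι → Bool) × (κ → Bool) => (x.1, Function.update x.2 j (xor (x.1 i) (x.2 j))) :=
    fun x => by simp
  rw [CNOT2, ← Function.comp_def v]
  convert mulVec_of_involutive hinv v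

theorem prod_CNOT2_mulVec (l : List (ι × κ)) (v : (ι → Bool) × (κ → Bool) → ℂ) :
    (l.map fun p => CNOT2 p.1 p.2).prod *ᵥ v
      = fun x => v (x.1, fun j => xor (x.2 j) (cnotFlips l x.1 j).bodd) := by
  induction l generalizing v with
  | nil => simp [cnotFlips]
  | cons p t ih =>
    rw [List.map_cons, List.prod_cons, ← mulVec_mulVec, ih, CNOT2_mulVec]
    funext x
    congr 2
    funext j
    simp only [cnotFlips, List.countP_cons]
    by_cases hj : j = p.2
    · subst hj
      cases x.1 p.1 <;> simp
    · simp [hj, Ne.symm hj]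

end CNOT

section RoundRobin

open Finset

theorem cnotFlips_eq_of_toFinset_eq {ι κ : Type*} [DecidableEq ι] [DecidableEq κ]
    {A : Finset ι} {B : Finset κ} {l : List (ι × κ)} (hl : l.Nodup) (hlAB : l.toFinset = A ×ˢ B)
    (x : ι → Bool) (j : κ) :
    cnotFlips l x j = if j ∈ B then #{i ∈ A | x i} else 0 := by
  have hfilter : {p ∈ A ×ˢ B | (decide (p.2 = j) && x p.1) = true}
      = {i ∈ A | x i} ×ˢ {k ∈ B | k = j} := by
    rw [← filter_product]
    simp [and_comm]
  rw [cnotFlips, List.countP_eq_length_filter, ← List.toFinset_card_of_nodup (hl.filter _),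
    List.toFinset_filter, hlAB, hfilter, card_product, filter_eq']
  split_ifs <;> simp

theorem prod_CNOT2_mulVec_of_toFinset_eq {ι κ : Type*} [Fintype ι] [Fintype κ]
    [DecidableEq ι] [DecidableEq κ] {A : Finset ι} {B : Finset κ} {l : List (ι × κ)}
    (hl : l.Nodup) (hlAB : l.toFinset = A ×ˢ B) (v : (ι → Bool) × (κ → Bool) → ℂ) :
    (l.map fun p => CNOT2 p.1 p.2).prod *ᵥ v
      = fun x => v (x.1, fun j => xor (x.2 j) (decide (j ∈ B) && (#{i ∈ A | x.1 i}).bodd)) := by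
  rw [prod_CNOT2_mulVec]
  funext x
  congr 3
  funext j
  rw [cnotFlips_eq_of_toFinset_eq hl hlAB]
  split_ifs <;> simp [*]

end RoundRobin

section Steane

open Finset

theorem bodd_card_filter_not {ι : Type*} {A : Finset ι} (hA : (#A).bodd) (x : ι → Bool) :
    (#{i ∈ A | !x i}).bodd = !(#{i ∈ A | x i}).bodd := by
  have hsplit : #{i ∈ A | x i} + #{i ∈ A | !x i} = #A := by
    simpa using card_filter_add_card_filter_not (s := A) (fun i => x i = true)
  rw [← hsplit, Nat.bodd_add] at hA
  revert hA
  cases (#{i ∈ A | x i}).bodd <;> cases (#{i ∈ A | !x i}).bodd <;> simp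

theorem steane_true_apply (y : Fin 7 → Bool) : steane true y = steane false fun i => !y i := by
  simp only [steane, Bool.false_eq_true, ↓reduceIte, tensMat_const_σx_mulVec]

/-- Each generator of `C` has even weight on the first three qubits (`000`, `011`, `101`). -/
theorem bodd_card_filter_of_mem_hammingC {c : Fin 7 → Bool} (hc : c ∈ hammingC) :
    (#{i ∈ ({0, 1, 2} : Finset (Fin 7)) | c i}).bodd = false := by
  obtain ⟨a, b, e, rfl⟩ := hc
  revert a b e
  decide

theorem bodd_card_filter_of_steane_ne_zero {a : Bool} {y : Fin 7 → Bool} (hy : steane a y ≠ 0) :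
    (#{i ∈ ({0, 1, 2} : Finset (Fin 7)) | y i}).bodd = a := by
  have mem_of_ne_zero : ∀ z, steane false z ≠ 0 → z ∈ hammingC := fun z hz => by
    by_contra hmem
    simp [steane, hmem] at hz
  cases a
  · exact bodd_card_filter_of_mem_hammingC (mem_of_ne_zero y hy)
  · rw [steane_true_apply] at hy
    have := bodd_card_filter_not (A := ({0, 1, 2} : Finset (Fin 7))) rfl fun i => !y i
    rw [bodd_card_filter_of_mem_hammingC (mem_of_ne_zero _ hy)] at this
    simpa using this

end Steane

def rmTargets : Finset (Fin 15) := {j | rmBit j 3 = false}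

theorem card_rmTargets : rmTargets.card = 7 := rfl

theorem rmLogical.apply_xor_rmTargets {w : Bool → (Fin 15 → Bool) → ℂ} (hw : rmLogical w)
    (b : Bool) (y : Fin 15 → Bool) :
    w b (fun j => xor (y j) (decide (j ∈ rmTargets))) = w (!b) y := by
  have hstab : ∀ b z, w b (fun i => xor (z i) (rmBit i 3)) = w b z := fun b z =>
    congrFun ((tensMat_σx_mulVec _ _).symm.trans
      (mulVec_eq_of_mem_jointFixed (hw.1 b) (Or.inl ⟨3, rfl⟩))) z
  have hflip : ∀ b z, w b (fun i => !z i) = w (!b) z := by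
    have h := hw.2.2.2.2
    rw [tensMat_const_σx_mulVec] at h
    rintro (_ | _) z
    · exact congrFun h z
    · simpa using (congrFun h fun i => !z i).symm
  rw [← hflip, ← hstab]
  refine congrArg (w b) (funext fun j => ?_)
  cases h : rmBit j 3 <;> simp [rmTargets, h]

theorem prod_CNOT2_mulVec_tens2_steane {l : List (Fin 7 × Fin 15)} (hl : l.Nodup)
    (hlAB : l.toFinset = {0, 1, 2} ×ˢ rmTargets) {w : Bool → (Fin 15 → Bool) → ℂ}
    (hw : rmLogical w) (a b : Bool) :
    (l.map fun p => CNOT2 p.1 p.2).prod *ᵥ tens2 (steane a) (w b)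
      = tens2 (steane a) (w (xor a b)) := by
  rw [prod_CNOT2_mulVec_of_toFinset_eq hl hlAB]
  funext x
  by_cases hx : steane a x.1 = 0
  · simp [tens2, hx]
  · rw [tens2, bodd_card_filter_of_steane_ne_zero hx]
    cases a
    · simp [tens2]
    · simp [tens2, hw.apply_xor_rmTargets]

/-- there are a 3-element set `A ⊆ {1,…,7}` and a 7-element set
`B ⊆ {1,…,15}` such that the round-robin product of the 21 CNOT gates `CNOT_{i→j}`,
`(i,j) ∈ A×B`, maps the tensor product of the Steane and `[[15,1,3]]` Reed–Muller
codespaces onto itself and implements the logical CNOT (Steane control, RM target). -/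
theorem stmt8 :
    ∃ (A : Finset (Fin 7)) (B : Finset (Fin 15)),
      A.card = 3 ∧ B.card = 7 ∧
      ∀ l : List (Fin 7 × Fin 15), l.Nodup → l.toFinset = A ×ˢ B →
        ∀ w : Bool → ((Fin 15 → Bool) → ℂ), rmLogical w →
          (∀ a b : Bool,
            ((l.map fun p => CNOT2 p.1 p.2).prod).mulVec (tens2 (steane a) (w b))
              = tens2 (steane a) (w (xor a b))) ∧
          Submodule.map ((l.map fun p => CNOT2 p.1 p.2).prod).mulVecLin
              (Submodule.span ℂ {u | ∃ a b : Bool, u = tens2 (steane a) (w b)})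
            = Submodule.span ℂ {u | ∃ a b : Bool, u = tens2 (steane a) (w b)} := by
  refine ⟨{0, 1, 2}, rmTargets, rfl, card_rmTargets, fun l hl hlAB w hw => ?_⟩
  have hlogical := prod_CNOT2_mulVec_tens2_steane hl hlAB hw
  refine ⟨hlogical, ?_⟩
  rw [Submodule.map_span]
  congr 1
  ext u
  constructor
  · rintro ⟨_, ⟨a, b, rfl⟩, rfl⟩
    exact ⟨a, xor a b, by rw [mulVecLin_apply, hlogical]⟩
  · rintro ⟨a, b, rfl⟩
    refine ⟨_, ⟨a, xor a b, rfl⟩, ?_⟩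
    rw [mulVecLin_apply, hlogical, ← Bool.xor_assoc, Bool.xor_self, Bool.false_xor]

end
end

section
/- The S gate is transversal on the Steane code: (S†)^{⊗7} maps the Steane codespace onto itself and implements the logical S gate exactly, i.e., (S†)^{⊗7}|0̄⟩ = |0̄⟩ and (S†)^{⊗7}|1̄⟩ = i|1̄⟩. -/
open scoped Classical
open Matrix

noncomputable section

lemma Sdag_mulVec (v : (Fin 7 → Bool) → ℂ) (x : Fin 7 → Bool) :
    (tensMat fun _ : Fin 7 => Sgateᴴ).mulVec v x
      = (-Complex.I) ^ ((Finset.univ.filter fun i => x i = true).card) * v x := by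
  unfold Matrix.mulVec dotProduct tensMat
  rw [Finset.sum_eq_single x]
  · congr 1
    simp only [Matrix.of_apply]
    rw [← Finset.prod_filter_mul_prod_filter_not Finset.univ (fun i => x i = true)]
    have h1 : ∀ i ∈ Finset.univ.filter (fun i => x i = true),
        Sgateᴴ (x i) (x i) = -Complex.I := by
      intro i hi; simp only [Finset.mem_filter] at hi
      simp [Sgate, Matrix.conjTranspose_apply, hi.2, Complex.conj_I]
    have h2 : ∀ i ∈ Finset.univ.filter (fun i => ¬ x i = true),
        Sgateᴴ (x i) (x i) = 1 := by
      intro i hi; simp only [Finset.mem_filter, Bool.not_eq_true] at hi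
      simp [Sgate, Matrix.conjTranspose_apply, hi.2]
    rw [Finset.prod_congr rfl h1, Finset.prod_congr rfl h2]
    simp
  · intro y _ hy
    have : ∃ i, x i ≠ y i := by
      by_contra h; push_neg at h; exact hy (funext fun i => (h i).symm)
    obtain ⟨i, hi⟩ := this
    have h0 : Sgateᴴ (x i) (y i) = 0 := by
      simp [Sgate, Matrix.conjTranspose_apply]
      intro h; exact absurd h.symm hi
    show (∏ i : Fin 7, Sgateᴴ (x i) (y i)) * v y = 0
    rw [Finset.prod_eq_zero (Finset.mem_univ i) h0, zero_mul]
  · simp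

lemma X_mulVec (v : (Fin 7 → Bool) → ℂ) (x : Fin 7 → Bool) :
    (tensMat fun _ : Fin 7 => σx).mulVec v x = v (fun i => !(x i)) := by
  unfold Matrix.mulVec dotProduct tensMat
  rw [Finset.sum_eq_single (fun i => !(x i))]
  · simp [σx]
  · intro y _ hy
    have : ∃ i, x i ≠ !(y i) := by
      by_contra h; push_neg at h
      exact hy (funext fun i => by have := h i; cases y i <;> cases x i <;> simp_all)
    obtain ⟨i, hi⟩ := this
    have h0 : σx (x i) (y i) = 0 := by simp [σx, hi]
    show (∏ i : Fin 7, σx (x i) (y i)) * v y = 0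
    rw [Finset.prod_eq_zero (Finset.mem_univ i) h0, zero_mul]
  · simp

lemma negI_pow_four : (-Complex.I) ^ (4:ℕ) = 1 := by
  rw [show (4:ℕ) = 2*2 from rfl, pow_mul, neg_pow, Complex.I_sq]; norm_num

lemma negI_pow_mod0 {n : ℕ} (h : n % 4 = 0) : (-Complex.I) ^ n = 1 := by
  conv_lhs => rw [← Nat.div_add_mod n 4, pow_add, pow_mul, negI_pow_four, one_pow, h]
  simp

lemma negI_pow_mod3 {n : ℕ} (h : n % 4 = 3) : (-Complex.I) ^ n = Complex.I := by
  conv_lhs => rw [← Nat.div_add_mod n 4, pow_add, pow_mul, negI_pow_four, one_pow, h]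
  rw [show (3:ℕ) = 2+1 from rfl, pow_add, neg_pow, Complex.I_sq]
  simp

set_option maxRecDepth 100000 in
lemma ham_card : ∀ x : Fin 7 → Bool,
    (∃ a b e : Bool, x = fun i => xor (a && steaneGen 0 i)
        (xor (b && steaneGen 1 i) (e && steaneGen 2 i))) →
    (Finset.univ.filter fun i => x i = true).card % 4 = 0 := by decide

set_option maxRecDepth 100000 in
lemma ham_card' : ∀ x : Fin 7 → Bool,
    (∃ a b e : Bool, (fun i => !(x i)) = fun i => xor (a && steaneGen 0 i)
        (xor (b && steaneGen 1 i) (e && steaneGen 2 i))) →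
    (Finset.univ.filter fun i => x i = true).card % 4 = 3 := by decide

/-- the `S` gate is transversal on the Steane code: `(S†)^{⊗7}` maps
the Steane codespace onto itself and implements the logical `S` exactly. -/
theorem stmt14 :
    Submodule.map (tensMat fun _ : Fin 7 => Sgateᴴ).mulVecLin
        (Submodule.span ℂ {steane false, steane true})
      = Submodule.span ℂ {steane false, steane true} ∧
    (tensMat fun _ : Fin 7 => Sgateᴴ).mulVec (steane false) = steane false ∧
    (tensMat fun _ : Fin 7 => Sgateᴴ).mulVec (steane true) = Complex.I • steane true := by
  have h2 : (tensMat fun _ : Fin 7 => Sgateᴴ).mulVec (steane false) = steane false := by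
    funext x
    rw [Sdag_mulVec]
    by_cases hx : x ∈ hammingC
    · rw [negI_pow_mod0 (ham_card x hx), one_mul]
    · have h0 : steane false x = 0 := by simp [steane, hx]
      rw [h0, mul_zero]
  have h3 : (tensMat fun _ : Fin 7 => Sgateᴴ).mulVec (steane true) = Complex.I • steane true := by
    funext x
    rw [Sdag_mulVec, Pi.smul_apply, smul_eq_mul]
    have hst : steane true = (tensMat fun _ : Fin 7 => σx).mulVec
        (fun y => if y ∈ hammingC then ((Real.sqrt 8 : ℂ))⁻¹ else 0) := rfl
    rw [hst, X_mulVec]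
    by_cases hx : (fun i => !(x i)) ∈ hammingC
    · rw [negI_pow_mod3 (ham_card' x hx), if_pos hx]
    · rw [if_neg hx, mul_zero, mul_zero]
  refine ⟨?_, h2, h3⟩
  have himg : (tensMat fun _ : Fin 7 => Sgateᴴ).mulVecLin '' {steane false, steane true}
      = {steane false, Complex.I • steane true} := by
    rw [Set.image_pair, Matrix.mulVecLin_apply, Matrix.mulVecLin_apply, h2, h3]
  rw [Submodule.map_span, himg]
  apply le_antisymm
  · rw [Submodule.span_le]
    rintro v (rfl | rfl)
    · exact Submodule.subset_span (Or.inl rfl)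
    · exact Submodule.smul_mem _ _ (Submodule.subset_span (Or.inr rfl))
  · rw [Submodule.span_le]
    rintro v (rfl | rfl)
    · exact Submodule.subset_span (Or.inl rfl)
    · have hm : Complex.I • steane true
          ∈ Submodule.span ℂ {steane false, Complex.I • steane true} :=
        Submodule.subset_span (Or.inr rfl)
      have hm2 := Submodule.smul_mem _ (Complex.I)⁻¹ hm
      rwa [smul_smul, inv_mul_cancel₀ Complex.I_ne_zero, one_smul] at hm2

end
end
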